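/- arXiv:1402.6261 — 6 statements merged into one kernel-verified Lean document; each statement's English description precedes it below -/
import Mathlib

section
/- Let σ be a noncrossing partition of [n]. Then the relation on {1̃,…,ñ} defining the dual partition is an equivalence relation, the resulting partition σ̃ of {1̃,…,ñ} is again noncrossing, and the number of blocks of σ plus the number of blocks of σ̃ equals n+1. -/
/-!
Write `I(i, j)` for the cyclic interval `(i, j]`. For `i ≠ j`, `ĩ` and `j̃` are dual exactly when
every block of `σ` lies on one side of the chord `ĩ j̃`, i.e. `x ∈ I(i, j) ↔ y ∈ I(i, j)` whenever
`x` and `y` share a block. In this form, transitivity and the noncrossing property of the dual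
relation are statements about intervals, valid for every partition `σ`.

The count is proved by induction on the number of blocks. A single block has the discrete dual,
which gives `1 + n`. Otherwise some adjacent points `p`, `p + 1` lie in different blocks. Merging
these two blocks keeps `σ` noncrossing, does not change the dual relation among points other than
`p`, and makes `p̃` a singleton of the new dual. Because `σ` is noncrossing, `p̃` was not alone
before: it is dual to the last point of the block of `p + 1`. So the merge exchanges one block of
`σ` for one block of `σ̃`.
-/

open Finset

noncomputable section
open scoped Classical

/-- The cyclic (clockwise) half-open interval `(a, b]` in `Fin m`. -/
def cIoc {m : ℕ} (a b : Fin m) : Finset (Fin m) :=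
  univ.filter fun k => if a < b then a < k ∧ k ≤ b else a < k ∨ k ≤ b

/-- The open cyclic (clockwise) arc from `a` to `b` in `Fin m`, excluding both endpoints. -/
def cIoo {m : ℕ} (a b : Fin m) : Finset (Fin m) :=
  univ.filter fun k => if a < b then a < k ∧ k < b else (a < k ∨ k < b) ∧ k ≠ a ∧ k ≠ b

/-- Set partitions of `[n] = Fin n`. -/
abbrev NCP (n : ℕ) := Finpartition (univ : Finset (Fin n))

/-- `a` and `b` lie in the same block of `σ`. -/
def sameBlock {n : ℕ} (σ : NCP n) (a b : Fin n) : Prop :=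
  ∃ B ∈ σ.parts, a ∈ B ∧ b ∈ B

/-- `σ` is a noncrossing partition: there are no `a < b < c < d` with `a, c` in one
block and `b, d` in a different block. -/
def IsNoncrossing {n : ℕ} (σ : NCP n) : Prop :=
  ∀ a b c d : Fin n, a < b → b < c → c < d →
    sameBlock σ a c → sameBlock σ b d → sameBlock σ a b

/-- The relation defining the dual (Kreweras complement) partition: `ĩ ~ j̃` iff no block
of `σ` meets both cyclic intervals `{(i+1), …, j}` and `{(j+1), …, i}`. -/
def dualRel {n : ℕ} (σ : NCP n) (i j : Fin n) : Prop :=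
  i = j ∨ ¬ ∃ B ∈ σ.parts, (B ∩ cIoc i j).Nonempty ∧ (B ∩ cIoc j i).Nonempty

/-- The point `ī` of `[2n]` (0-based: `ī = 2i`). -/
def bar {n : ℕ} (i : Fin n) : Fin (2*n) := ⟨2*(i:ℕ), by have := i.isLt; omega⟩

/-- The point `ĩ` of `[2n]` (0-based: `ĩ = 2i+1`). -/
def til {n : ℕ} (i : Fin n) : Fin (2*n) := ⟨2*(i:ℕ)+1, by have := i.isLt; omega⟩

/-- A matching (fixed-point-free involution) of `Fin m`. -/
def IsMatching {m : ℕ} (τ : Fin m → Fin m) : Prop :=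
  Function.Involutive τ ∧ ∀ i, τ i ≠ i

/-- A noncrossing matching: there are no `a < b < c < d` with `τ a = c` and `τ b = d`. -/
def IsNCMatching {m : ℕ} (τ : Fin m → Fin m) : Prop :=
  ¬ ∃ a b c d : Fin m, a < b ∧ b < c ∧ c < d ∧ τ a = c ∧ τ b = d

/-- `j` is the cyclic predecessor of `i` in the block of `σ` containing `i`
(`j = i` when `i` is a singleton). -/
def cyclicPred {n : ℕ} (σ : NCP n) (j i : Fin n) : Prop :=
  ∃ B ∈ σ.parts, i ∈ B ∧ j ∈ B ∧ ∀ x ∈ B, x ∉ cIoo j i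

/-- `m` is the medial pairing of `σ`: it pairs `ī` (0-based `2i`) with `j̃` (0-based `2j+1`),
where `j` is the cyclic predecessor of `i` in its block. -/
def IsMedialOf {n : ℕ} (σ : NCP n) (m : Fin (2*n) → Fin (2*n)) : Prop :=
  ∀ i j : Fin n, m (bar i) = til j ↔ cyclicPred σ j i

/-- The crossing number of a matching: the number of pairs `{a,b}` with
`a < b < τ a < τ b`. -/
def crossNum {m : ℕ} (τ : Fin m → Fin m) : ℕ :=
  ((univ : Finset (Fin m × Fin m)).filter fun p =>
    p.1 < p.2 ∧ p.2 < τ p.1 ∧ τ p.1 < τ p.2).card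

/-- `a`, `b`, `c`, `d` are distinct and in cyclic order on `Fin m`. -/
def CyclicOrder4 {m : ℕ} (a b c d : Fin m) : Prop :=
  (a < b ∧ b < c ∧ c < d) ∨ (b < c ∧ c < d ∧ d < a) ∨
  (c < d ∧ d < a ∧ a < b) ∨ (d < a ∧ a < b ∧ b < c)

/-- `τ` covers `τ'` in the uncrossing order. -/
def UncrossCover {m : ℕ} (τ' τ : Fin m → Fin m) : Prop :=
  IsMatching τ' ∧ IsMatching τ ∧
  ∃ a b c d : Fin m, CyclicOrder4 a b c d ∧ τ a = c ∧ τ b = d ∧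
    (∀ x, x ≠ a → x ≠ b → x ≠ c → x ≠ d → τ' x = τ x) ∧
    ((τ' a = d ∧ τ' b = c ∧ ∀ x ∈ cIoo a b, τ x ∉ cIoo c d) ∨
     (τ' a = b ∧ τ' c = d ∧ ∀ x ∈ cIoo b c, τ x ∉ cIoo d a))

/-- The uncrossing partial order on matchings: reflexive-transitive closure of covers. -/
def uncrossLE {m : ℕ} (τ' τ : Fin m → Fin m) : Prop :=
  Relation.ReflTransGen UncrossCover τ' τ

/-- An affine permutation of period `m`. -/
def IsAffinePerm (m : ℕ) (f : ℤ → ℤ) : Prop :=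
  Function.Bijective f ∧ ∀ i : ℤ, f (i + m) = f i + m

/-- The length of an affine permutation of period `m`:
`#{(i,j) : 1 ≤ i ≤ m, i < j, f i > f j}`. -/
def affLen (m : ℕ) (f : ℤ → ℤ) : ℕ :=
  Set.ncard {p : ℤ × ℤ | 1 ≤ p.1 ∧ p.1 ≤ (m:ℤ) ∧ p.1 < p.2 ∧ f p.2 < f p.1}

/-- The affine rank matrix `r_f(i,j) = #{a ≤ i : f a ≥ j}`. -/
def rankMat (f : ℤ → ℤ) (i j : ℤ) : ℕ :=
  Set.ncard {a : ℤ | a ≤ i ∧ j ≤ f a}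

/-- Affine Bruhat order via rank matrices. -/
def bruhatLE (f g : ℤ → ℤ) : Prop := ∀ i j : ℤ, rankMat f i j ≤ rankMat g i j

/-- The sum `Σ_{i=1}^m (f i − i)`. -/
def windowSum (m : ℕ) (f : ℤ → ℤ) : ℤ :=
  ∑ i ∈ Finset.range m, (f ((i:ℤ)+1) - ((i:ℤ)+1))

/-- The affine permutation `g_τ` associated to a matching `τ` of `[2n]`:
on `[2n]`, `g_τ i = τ i` if `τ i > i` and `g_τ i = τ i + 2n` if `τ i < i`,
extended periodically. -/
def gTau (n : ℕ) (τ : Fin (2*n) → Fin (2*n)) (i : ℤ) : ℤ :=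
  if h : (i % ((2*n : ℕ) : ℤ)).toNat < 2*n then
    let r : Fin (2*n) := ⟨(i % ((2*n : ℕ) : ℤ)).toNat, h⟩
    (i - i % ((2*n : ℕ) : ℤ)) +
      (if r < τ r then ((τ r : ℕ) : ℤ) else ((τ r : ℕ) : ℤ) + 2*n)
  else i

/-- `f_τ = g_τ − 1`. -/
def fTau (n : ℕ) (τ : Fin (2*n) → Fin (2*n)) (i : ℤ) : ℤ := gTau n τ i - 1

/-- An electrical affine permutation for `n`. -/
def IsElectrical (n : ℕ) (f : ℤ → ℤ) : Prop :=
  IsAffinePerm (2*n) f ∧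
  (∀ i : ℤ, i ≤ f i ∧ f i ≤ i + 2*n - 2) ∧
  windowSum (2*n) f = ((n:ℤ) - 1) * (2*n) ∧
  ∀ i : ℤ, (f (f i + 1) - (i - 1)) % ((2*n : ℕ) : ℤ) = 0

/-- The Grassmann necklace subset `I_a(f) ⊆ [m]`: representatives in `[m]` (0-based) of
`{f b mod m : b < a and f b ≥ a}`. -/
def necklaceI (m : ℕ) (f : ℤ → ℤ) (a : ℤ) : Finset (Fin m) :=
  univ.filter fun x => ∃ b : ℤ, b < a ∧ a ≤ f b ∧ f b % (m:ℤ) = ((x:ℕ):ℤ)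

/-- The dual necklace subset `J_a(f) ⊆ [m]`: representatives in `[m]` (0-based) of
`{b mod m : b < a and f b ≥ a}`. -/
def necklaceJ (m : ℕ) (f : ℤ → ℤ) (a : ℤ) : Finset (Fin m) :=
  univ.filter fun x => ∃ b : ℤ, b < a ∧ a ≤ f b ∧ b % (m:ℤ) = ((x:ℕ):ℤ)

/-- Dominance order on `k`-element subsets of `Fin m`:
the `r`-th smallest element of `I` is at most the `r`-th smallest element of `J`. -/
def domLE {m : ℕ} (k : ℕ) (I J : Finset (Fin m)) : Prop :=
  ∃ (hI : I.card = k) (hJ : J.card = k),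
    ∀ r : Fin k, I.orderEmbOfFin hI r ≤ J.orderEmbOfFin hJ r

/-- `a`-shifted dominance order: rotate so that `a` becomes least, then compare. -/
def sdomLE {m : ℕ} (k : ℕ) (a : Fin m) (I J : Finset (Fin m)) : Prop :=
  domLE k (I.image (· - a)) (J.image (· - a))

/-- `a`-shifted lexicographic order on subsets of `Fin m`. -/
def lexLE {m : ℕ} (a : Fin m) (I J : Finset (Fin m)) : Prop :=
  I = J ∨ List.Lex (· < ·) ((I.image (· - a)).sort (· ≤ ·)) ((J.image (· - a)).sort (· ≤ ·))

/-- A Catalan subset of `[2n]` (0-based): an `(n−1)`-subset such that the length-`2n`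
word with `U` at positions `{0} ∪ {x+1 : x ∈ I}` and `D` elsewhere is a Dyck path. -/
def IsCatalan {n : ℕ} (I : Finset (Fin (2*n))) : Prop :=
  I.card = n - 1 ∧
  ∀ p : ℕ, p ≤ 2*n →
    p ≤ 2 * ((insert 0 (I.image fun x => (x:ℕ)+1)).filter (· < p)).card

/-- Catalan subset with respect to the shifted order `≤_a`. -/
def IsCatalanAt {n : ℕ} (a : Fin (2*n)) (I : Finset (Fin (2*n))) : Prop :=
  IsCatalan (I.image (· - a))

/-- The set of maxima of `S` with respect to the `a`-shifted order. -/
def maxAt {m : ℕ} (a : Fin m) (S : Finset (Fin m)) : Finset (Fin m) :=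
  S.filter fun x => ∀ y ∈ S, y - a ≤ x - a

/-- `I_a(σ)` for a noncrossing partition `σ`: the complement in `[2n]` of the set of
`≤_a`-maxima of the blocks of `σ` (embedded by `bar`) and of the blocks of the dual
partition `σ̃` (embedded by `til`). -/
def IaP {n : ℕ} (σ : NCP n) (a : Fin (2*n)) : Finset (Fin (2*n)) :=
  univ \ ((σ.parts.biUnion fun B => maxAt a (B.image bar)) ∪
          ((univ : Finset (Fin n)).biUnion fun i =>
            maxAt a ((univ.filter (dualRel σ i)).image til)))

/-- `I` is concordant with `σ`: `I` has `n−1` elements and every block of `σ` and of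
its dual `σ̃` contains exactly one element of `[2n] ∖ I`. -/
def Concordant {n : ℕ} (σ : NCP n) (I : Finset (Fin (2*n))) : Prop :=
  I.card = n - 1 ∧
  (∀ B ∈ σ.parts, ((B.image bar) ∩ (univ \ I)).card = 1) ∧
  (∀ i : Fin n, (((univ.filter (dualRel σ i)).image til) ∩ (univ \ I)).card = 1)

/-- `E(I)`: the set of noncrossing partitions concordant with `I`. -/
def ESet {n : ℕ} (I : Finset (Fin (2*n))) : Set (NCP n) :=
  {σ | IsNoncrossing σ ∧ Concordant σ I}

/-- The maximal minor `Δ_I(X)` on the columns indexed by `I`, in increasing order. -/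
def minorOn {k m : ℕ} (X : Matrix (Fin k) (Fin m) ℝ) (I : Finset (Fin m)) : ℝ :=
  if h : I.card = k then (X.submatrix id fun r => I.orderEmbOfFin h r).det else 0

/-- `X` is totally nonnegative: it has full rank `k` and all maximal minors are `≥ 0`. -/
def IsTNN {k m : ℕ} (X : Matrix (Fin k) (Fin m) ℝ) : Prop :=
  X.rank = k ∧ ∀ I : Finset (Fin m), I.card = k → 0 ≤ minorOn X I

/-- `t` times the matrix unit `E_{p,q}` (0-based indices). -/
def matE (m : ℕ) (p q : ℕ) (t : ℝ) : Matrix (Fin m) (Fin m) ℝ :=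
  Matrix.of fun r s => if (r:ℕ) = p ∧ (s:ℕ) = q then t else 0

/-- `x_i(t) = Id + t·E_{i,i+1}` (1-based index `i`). -/
def xB (m i : ℕ) (t : ℝ) : Matrix (Fin m) (Fin m) ℝ := 1 + matE m (i-1) i t

/-- `y_i(t) = Id + t·E_{i+1,i}` (1-based index `i`). -/
def yB (m i : ℕ) (t : ℝ) : Matrix (Fin m) (Fin m) ℝ := 1 + matE m i (i-1) t

/-- `u_i(t) = x_i(t)·y_{i−1}(t)` (1-based index `i`). -/
def uB (m i : ℕ) (t : ℝ) : Matrix (Fin m) (Fin m) ℝ := xB m i t * yB m (i-1) t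

/-- The columns of `X`, extended `n`-periodically to all integer indices (0-based). -/
def colP {k n : ℕ} (X : Matrix (Fin k) (Fin n) ℝ) (i : ℤ) : Fin k → ℝ :=
  fun r => if h : (i % (n:ℤ)).toNat < n then X r ⟨(i % (n:ℤ)).toNat, h⟩ else 0

/-- `f_X(i) = min { j ≥ i : v_i ∈ span(v_{i+1}, …, v_j) }` (0-based columns). -/
def fX {k n : ℕ} (X : Matrix (Fin k) (Fin n) ℝ) (i : ℤ) : ℤ :=
  sInf {j : ℤ | i ≤ j ∧ colP X i ∈ Submodule.span ℝ (colP X '' Set.Ioc i j)}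

/-- Fintype instance for finite partitions of a finite set. -/
instance {α : Type*} [DecidableEq α] [Fintype α] (s : Finset α) : Fintype (Finpartition s) :=
  Fintype.ofInjective Finpartition.parts fun _ _ h => Finpartition.ext h

/-- The sorted list of (the values of) a subset of `Fin m`. -/
def sortedL {m : ℕ} (I : Finset (Fin m)) : List ℕ :=
  (I.sort (· ≤ ·)).map Fin.val

/-- The number of inversions of a list (= the number of adjacent transpositions
needed to sort it, when entries are distinct). -/
def invNum (l : List ℕ) : ℕ :=
  ((Finset.range l.length ×ˢ Finset.range l.length).filter fun pq =>
    pq.1 < pq.2 ∧ l.getD pq.2 0 < l.getD pq.1 0).card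

/-- The subset of `Fin m` whose values lie in the list `l`. -/
def toFinF {m : ℕ} (l : List ℕ) : Finset (Fin m) :=
  univ.filter fun x => (x:ℕ) ∈ l

/-- The double sum `Σ_{σ ∈ E(l), κ ∈ E(l')} L σ · L κ`, where `E` of a list with a
repeated entry (or an out-of-range entry) is empty. -/
def pairSum {n : ℕ} (L : NCP n → ℝ) (l l' : List ℕ) : ℝ :=
  if (l.Nodup ∧ ∀ x ∈ l, x < 2*n) ∧ (l'.Nodup ∧ ∀ x ∈ l', x < 2*n) then
    ∑ᶠ σ ∈ ESet (n := n) (toFinF l), ∑ᶠ κ ∈ ESet (n := n) (toFinF l'), L σ * L κ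
  else 0

/-- The list obtained from `LI` by replacing its entries at the positions in `S`
(in increasing order of position) by the first `#S` entries of `LJ`. -/
def swapI (LI LJ : List ℕ) (S : Finset ℕ) : List ℕ :=
  (List.range LI.length).map fun p =>
    if p ∈ S then LJ.getD ((S.filter (· < p)).card) 0 else LI.getD p 0

/-- The list obtained from `LJ` by replacing its first `#S` entries by the entries of
`LI` at the positions in `S`, in increasing order. -/
def swapJ (LI LJ : List ℕ) (S : Finset ℕ) : List ℕ :=
  (List.range LJ.length).map fun p =>
    if p < S.card then LI.getD ((S.sort (· ≤ ·)).getD p 0) 0 else LJ.getD p 0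

lemma mem_cIoc {m : ℕ} {a b x : Fin m} :
    x ∈ cIoc a b ↔ a < b ∧ a < x ∧ x ≤ b ∨ b ≤ a ∧ (a < x ∨ x ≤ b) := by
  simp only [cIoc, mem_filter, mem_univ, true_and]
  split_ifs <;> omega

lemma mem_cIoc_swap {m : ℕ} {a b x : Fin m} (hab : a ≠ b) : x ∈ cIoc b a ↔ x ∉ cIoc a b := by
  simp only [mem_cIoc]
  omega

lemma exists_forall_mem_cIoc {m : ℕ} {C : Finset (Fin m)} (hC : C.Nonempty) {p : Fin m}
    (hp : p ∉ C) : ∃ j ∈ C, ∀ x ∈ C, x ∈ cIoc p j := by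
  obtain ⟨j, hj, hmax⟩ := C.exists_max_image
    (fun x : Fin m => if p < x then (x : ℕ) - p else x + m - p) hC
  refine ⟨j, hj, fun x hx => ?_⟩
  have hjx := hmax x hx
  have : x ≠ p := by rintro rfl; exact hp hx
  have : j ≠ p := by rintro rfl; exact hp hj
  rw [mem_cIoc]
  split_ifs at hjx <;> omega

variable {n : ℕ}

lemma dualRel_iff {σ : NCP n} {i j : Fin n} :
    dualRel σ i j ↔ i = j ∨ ∀ x y, sameBlock σ x y → (x ∈ cIoc i j ↔ y ∈ cIoc i j) := by
  by_cases hij : i = j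
  · simp [dualRel, hij]
  simp only [dualRel, hij, false_or, Finset.Nonempty, mem_inter, mem_cIoc_swap hij]
  refine ⟨fun h x y ⟨B, hB, hx, hy⟩ => ?_, fun h ⟨B, hB, ⟨x, hxB, hx⟩, ⟨y, hyB, hy⟩⟩ => ?_⟩
  · by_contra hxy
    by_cases hxI : x ∈ cIoc i j
    · exact h ⟨B, hB, ⟨x, hx, hxI⟩, ⟨y, hy, fun hyI => hxy (iff_of_true hxI hyI)⟩⟩
    · exact h ⟨B, hB, ⟨y, hy, by tauto⟩, ⟨x, hx, hxI⟩⟩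
  · exact hy ((h x y ⟨B, hB, hxB, hyB⟩).1 hx)

theorem dualRel_equivalence (σ : NCP n) : Equivalence (dualRel σ) where
  refl _ := .inl rfl
  symm {i j} h := by
    rw [dualRel_iff] at h ⊢
    refine h.imp Eq.symm fun h x y hxy => ?_
    have := h x y hxy
    simp only [mem_cIoc] at this ⊢
    omega
  trans {i j k} hij hjk := by
    rw [dualRel_iff] at hij hjk ⊢
    rcases hij with rfl | hij
    · exact hjk
    rcases hjk with rfl | hjk
    · exact .inr hij
    refine or_iff_not_imp_left.2 fun hik x y hxy => ?_
    have h₁ := hij x y hxy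
    have h₂ := hjk x y hxy
    simp only [mem_cIoc] at h₁ h₂ ⊢
    omega

theorem dualRel_noncrossing (σ : NCP n) {a b c d : Fin n} (hab : a < b) (hbc : b < c)
    (hcd : c < d) (hac : dualRel σ a c) (hbd : dualRel σ b d) : dualRel σ a b := by
  rw [dualRel_iff] at hac hbd ⊢
  refine .inr fun x y hxy => ?_
  have h₁ := hac.resolve_left (hab.trans hbc).ne x y hxy
  have h₂ := hbd.resolve_left (hbc.trans hcd).ne x y hxy
  simp only [mem_cIoc] at h₁ h₂ ⊢
  omega

lemma sameBlock_iff_part_eq {σ : NCP n} {x y : Fin n} : sameBlock σ x y ↔ σ.part x = σ.part y := by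
  rw [sameBlock, ← Finpartition.mem_part_iff_exists,
    σ.mem_part_iff_part_eq_part (mem_univ x) (mem_univ y)]

lemma sameBlock_equivalence (σ : NCP n) : Equivalence (sameBlock σ) := by
  have : sameBlock σ = Function.onFun (· = ·) σ.part := by ext; exact sameBlock_iff_part_eq
  exact this ▸ eq_equivalence.comap σ.part

theorem isNoncrossing_iff_between {σ : NCP n} :
    IsNoncrossing σ ↔ ∀ ⦃x y u v : Fin n⦄, sameBlock σ x y → sameBlock σ u v →
      ¬ sameBlock σ x u → (x < u ∧ u < y ∨ y < u ∧ u < x) → (x < v ∧ v < y ∨ y < v ∧ v < x) := by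
  have hs := sameBlock_equivalence σ
  refine ⟨fun hσ x y u v hxy huv hxu h => ?_, fun h a b c d hab hbc hcd hac hbd => ?_⟩
  · have hvx : v ≠ x := by rintro rfl; exact hxu (hs.symm huv)
    have hvy : v ≠ y := by rintro rfl; exact hxu (hs.trans hxy (hs.symm huv))
    by_contra hv
    rcases h with ⟨hxu', huy⟩ | ⟨hyu, hux⟩
    · obtain hv' | hv' : v < x ∨ y < v := by omega
      · exact hxu (hs.trans (hs.symm (hσ v x u y hv' hxu' huy (hs.symm huv) hxy)) (hs.symm huv))
      · exact hxu (hσ x u y v hxu' huy hv' hxy huv)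
    · obtain hv' | hv' : v < y ∨ x < v := by omega
      · have := hσ v y u x hv' hyu hux (hs.symm huv) (hs.symm hxy)
        exact hxu (hs.trans hxy (hs.trans (hs.symm this) (hs.symm huv)))
      · exact hxu (hs.trans hxy (hσ y u x v hyu hux hv' (hs.symm hxy) huv))
  · by_contra hab'
    have := h hac hbd hab' (.inl ⟨hab, hbc⟩)
    omega

theorem IsNoncrossing.between_iff {σ : NCP n} (hσ : IsNoncrossing σ) {x y u v : Fin n}
    (hxy : sameBlock σ x y) (huv : sameBlock σ u v) (hxu : ¬ sameBlock σ x u) :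
    (x < u ∧ u < y ∨ y < u ∧ u < x) ↔ (x < v ∧ v < y ∨ y < v ∧ v < x) :=
  have hs := sameBlock_equivalence σ
  ⟨isNoncrossing_iff_between.1 hσ hxy huv hxu,
    isNoncrossing_iff_between.1 hσ hxy (hs.symm huv) fun hxv => hxu (hs.trans hxv (hs.symm huv))⟩

namespace Finpartition

variable {α : Type*} [DecidableEq α] {s : Finset α} (P : Finpartition s) {B C : Finset α}

def mergeParts (hB : B ∈ P.parts) (hC : C ∈ P.parts) : Finpartition s where
  parts := insert (B ∪ C) ((P.parts.erase B).erase C)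
  supIndep := by
    rw [supIndep_iff_pairwiseDisjoint, coe_insert]
    refine (P.disjoint.subset fun D hD => ?_).insert fun D hD _ => ?_
    · exact mem_of_mem_erase (mem_of_mem_erase hD)
    · obtain ⟨⟨hD, hDB⟩, hDC⟩ : (D ∈ P.parts ∧ D ≠ B) ∧ D ≠ C := by simpa using hD
      exact disjoint_union_left.2 ⟨P.disjoint hB hD hDB.symm, P.disjoint hC hD hDC.symm⟩
  sup_parts := by
    refine (le_antisymm ?_ ?_).trans P.sup_parts
    · refine Finset.sup_le fun D hD => ?_
      rcases mem_insert.1 hD with rfl | hD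
      · exact union_subset (le_sup (f := id) hB) (le_sup (f := id) hC)
      · exact le_sup (f := id) (mem_of_mem_erase (mem_of_mem_erase hD))
    · refine Finset.sup_le fun D hD => ?_
      by_cases hDB : D = B
      · exact hDB ▸ subset_union_left.trans (le_sup (f := id) (mem_insert_self _ _))
      by_cases hDC : D = C
      · exact hDC ▸ subset_union_right.trans (le_sup (f := id) (mem_insert_self _ _))
      exact le_sup (f := id) (mem_insert_of_mem (mem_erase.2 ⟨hDC, mem_erase.2 ⟨hDB, hD⟩⟩))
  bot_notMem := by
    rw [mem_insert, not_or]
    refine ⟨fun h => ?_, fun h => P.bot_notMem (mem_of_mem_erase (mem_of_mem_erase h))⟩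
    obtain ⟨x, hx⟩ := P.nonempty_of_mem_parts hB
    rw [bot_eq_empty] at h
    exact notMem_empty x (h ▸ mem_union_left C hx)

variable {P}

lemma mem_mergeParts (hB : B ∈ P.parts) (hC : C ∈ P.parts) {D : Finset α} :
    D ∈ (P.mergeParts hB hC).parts ↔ D = B ∪ C ∨ D ∈ P.parts ∧ D ≠ B ∧ D ≠ C := by
  simp only [mergeParts, mem_insert, mem_erase]
  tauto

lemma card_mergeParts (hB : B ∈ P.parts) (hC : C ∈ P.parts) (hBC : B ≠ C) :
    #(P.mergeParts hB hC).parts + 1 = #P.parts := by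
  have hU : B ∪ C ∉ (P.parts.erase B).erase C := fun h => by
    have hUB : B ∪ C = B := by
      obtain ⟨x, hx⟩ := P.nonempty_of_mem_parts hB
      exact P.eq_of_mem_parts (mem_of_mem_erase (mem_of_mem_erase h)) hB (mem_union_left C hx) hx
    obtain ⟨y, hy⟩ := P.nonempty_of_mem_parts hC
    exact hBC (P.eq_of_mem_parts hB hC (hUB ▸ mem_union_right B hy) hy)
  rw [mergeParts, card_insert_of_notMem hU, card_erase_of_mem (mem_erase.2 ⟨hBC.symm, hC⟩),
    card_erase_of_mem hB]
  have : 2 ≤ #P.parts := one_lt_card.2 ⟨B, hB, C, hC, hBC⟩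
  omega

end Finpartition

lemma Equivalence.filter_eq_of_rel {α : Type*} [Fintype α] {r : α → α → Prop}
    (hr : Equivalence r) {i k : α} (hik : r i k) : univ.filter (r i) = univ.filter (r k) := by
  ext x
  simp only [mem_filter, mem_univ, true_and]
  exact ⟨hr.trans (hr.symm hik), hr.trans hik⟩

lemma card_classes_of_isolate {α : Type*} [Fintype α] [DecidableEq α] {r r' : α → α → Prop}
    (hr : Equivalence r) (hr' : Equivalence r') {m j : α} (hjm : j ≠ m) (hmj : r m j)
    (hm : ∀ i, r' m i → i = m) (hrr' : ∀ i k, i ≠ m → k ≠ m → (r' i k ↔ r i k)) :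
    #(univ.image fun i => univ.filter (r' i)) = #(univ.image fun i => univ.filter (r i)) + 1 := by
  set f := fun i => univ.filter (r i)
  set g := fun i => univ.filter (r' i)
  have hf : ∀ {i k}, r i k → f i = f k := hr.filter_eq_of_rel
  have hgm : g m = {m} := by
    ext k; simp only [g, mem_filter, mem_univ, true_and, mem_singleton]
    exact ⟨hm k, fun h => h ▸ hr'.refl m⟩
  have hg : ∀ i ≠ m, g i = (f i).erase m := fun i hi => by
    ext k; simp only [f, g, mem_filter, mem_erase, mem_univ, true_and]
    by_cases hk : k = m
    · subst hk; exact iff_of_false (fun h => hi (hm i (hr'.symm h))) fun h => h.1 rfl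
    · exact (hrr' i k hi hk).trans (and_iff_right hk).symm
  have himg : univ.image g = insert {m} ((univ.image f).image (·.erase m)) := by
    ext K
    simp only [mem_image, mem_insert, mem_univ, true_and, exists_exists_eq_and]
    constructor
    · rintro ⟨i, rfl⟩
      by_cases hi : i = m
      · exact .inl (hi ▸ hgm)
      · exact .inr ⟨i, (hg i hi).symm⟩
    · rintro (rfl | ⟨i, rfl⟩)
      · exact ⟨m, hgm⟩
      by_cases hi : i = m
      · exact ⟨j, by rw [hg j hjm, ← hf (hi ▸ hmj)]⟩
      · exact ⟨i, hg i hi⟩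
  have hinj : Set.InjOn (·.erase m) (univ.image f : Set (Finset α)) := by
    simp only [coe_image, coe_univ, Set.image_univ]
    rintro _ ⟨i, rfl⟩ _ ⟨k, rfl⟩ hik
    obtain ⟨w, hw, hwi⟩ : ∃ w ≠ m, r i w := by
      by_cases hi : i = m
      · exact ⟨j, hjm, hi ▸ hmj⟩
      · exact ⟨i, hi, hr.refl i⟩
    have hwk : w ∈ (f k).erase m := by
      rw [← show (f i).erase m = (f k).erase m from hik]
      exact mem_erase.2 ⟨hw, by simpa [f] using hwi⟩
    exact (hf hwi).trans (hf (by simpa [f] using (mem_erase.1 hwk).2)).symm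
  rw [himg, card_insert_of_notMem, card_image_of_injOn hinj]
  simp only [mem_image]
  rintro ⟨K, -, hK⟩
  exact notMem_erase m K (hK ▸ mem_singleton_self m)

def joinBlocks (σ : NCP n) (p q : Fin n) : NCP n :=
  σ.mergeParts (σ.part_mem.2 (mem_univ p)) (σ.part_mem.2 (mem_univ q))

section joinBlocks

variable {σ : NCP n} {p q : Fin n}

lemma sameBlock_joinBlocks {x y : Fin n} :
    sameBlock (joinBlocks σ p q) x y ↔ sameBlock σ x y ∨
      (sameBlock σ x p ∨ sameBlock σ x q) ∧ (sameBlock σ y p ∨ sameBlock σ y q) := by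
  have hU : ∀ z, z ∈ σ.part p ∪ σ.part q ↔ sameBlock σ z p ∨ sameBlock σ z q := fun z => by
    rw [mem_union, Finpartition.mem_part_iff_exists, Finpartition.mem_part_iff_exists]; rfl
  have hUmem : σ.part p ∪ σ.part q ∈ (joinBlocks σ p q).parts :=
    (Finpartition.mem_mergeParts _ _).2 (.inl rfl)
  constructor
  · rintro ⟨D, hD, hx, hy⟩
    rcases (Finpartition.mem_mergeParts _ _).1 hD with rfl | ⟨hD, -, -⟩
    · exact .inr ⟨(hU x).1 hx, (hU y).1 hy⟩
    · exact .inl ⟨D, hD, hx, hy⟩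
  · rintro (⟨D, hD, hx, hy⟩ | ⟨hx, hy⟩)
    · by_cases hDp : D = σ.part p
      · exact ⟨_, hUmem, mem_union_left _ (hDp ▸ hx), mem_union_left _ (hDp ▸ hy)⟩
      by_cases hDq : D = σ.part q
      · exact ⟨_, hUmem, mem_union_right _ (hDq ▸ hx), mem_union_right _ (hDq ▸ hy)⟩
      exact ⟨D, (Finpartition.mem_mergeParts _ _).2 (.inr ⟨hD, hDp, hDq⟩), hx, hy⟩
    · exact ⟨_, hUmem, (hU x).2 hx, (hU y).2 hy⟩

lemma card_parts_joinBlocks (hpq : ¬ sameBlock σ p q) :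
    #(joinBlocks σ p q).parts + 1 = #σ.parts :=
  Finpartition.card_mergeParts _ _ fun h => hpq (sameBlock_iff_part_eq.2 h)

end joinBlocks

section adjacent

variable {σ : NCP n} {p q : Fin n}

lemma IsNoncrossing.between_iff_of_joined_ends (hσ : IsNoncrossing σ) (hpq : (q : ℕ) = p + 1)
    {z z' u v : Fin n} (hz : sameBlock σ z p ∨ sameBlock σ z q)
    (hz' : sameBlock σ z' p ∨ sameBlock σ z' q) (huv : sameBlock σ u v)
    (hu : ¬ (sameBlock σ u p ∨ sameBlock σ u q)) :
    (z < u ∧ u < z' ∨ z' < u ∧ u < z) ↔ (z < v ∧ v < z' ∨ z' < v ∧ v < z) := by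
  have hs := sameBlock_equivalence σ
  have hv : ¬ (sameBlock σ v p ∨ sameBlock σ v q) :=
    fun hv => hu (hv.imp (hs.trans huv) (hs.trans huv))
  have : u ≠ p := by rintro rfl; exact hu (.inl (hs.refl u))
  have : v ≠ p := by rintro rfl; exact hv (.inl (hs.refl v))
  have : u ≠ q := by rintro rfl; exact hu (.inr (hs.refl u))
  have : v ≠ q := by rintro rfl; exact hv (.inr (hs.refl v))
  -- since `p` and `q` are adjacent, chords ending at `p` or at `q` separate the same points
  have chord : ∀ {w}, (sameBlock σ w p ∨ sameBlock σ w q) →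
      ((w < u ∧ u < p ∨ p < u ∧ u < w) ↔ (w < v ∧ v < p ∨ p < v ∧ v < w)) := by
    rintro w (hw | hw)
    · exact hσ.between_iff hw huv fun hwu => hu (.inl (hs.trans (hs.symm hwu) hw))
    · have := hσ.between_iff hw huv fun hwu => hu (.inr (hs.trans (hs.symm hwu) hw))
      omega
  have := chord hz; have := chord hz'
  have : u ≠ z := by rintro rfl; exact hu hz
  have : v ≠ z := by rintro rfl; exact hv hz
  have : u ≠ z' := by rintro rfl; exact hu hz'
  have : v ≠ z' := by rintro rfl; exact hv hz'
  omega

lemma IsNoncrossing.between_iff_of_joined_points (hσ : IsNoncrossing σ) (hpq : (q : ℕ) = p + 1)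
    {x y w w' : Fin n} (hxy : sameBlock σ x y) (hx : ¬ (sameBlock σ x p ∨ sameBlock σ x q))
    (hw : sameBlock σ w p ∨ sameBlock σ w q) (hw' : sameBlock σ w' p ∨ sameBlock σ w' q) :
    (x < w ∧ w < y ∨ y < w ∧ w < x) ↔ (x < w' ∧ w' < y ∨ y < w' ∧ w' < x) := by
  have hs := sameBlock_equivalence σ
  have hy : ¬ (sameBlock σ y p ∨ sameBlock σ y q) :=
    fun hy => hx (hy.imp (hs.trans hxy) (hs.trans hxy))
  have : x ≠ p := by rintro rfl; exact hx (.inl (hs.refl x))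
  have : y ≠ p := by rintro rfl; exact hy (.inl (hs.refl y))
  have : x ≠ q := by rintro rfl; exact hx (.inr (hs.refl x))
  have : y ≠ q := by rintro rfl; exact hy (.inr (hs.refl y))
  have chord : ∀ {w}, (sameBlock σ w p ∨ sameBlock σ w q) →
      ((x < w ∧ w < y ∨ y < w ∧ w < x) ↔ (x < p ∧ p < y ∨ y < p ∧ p < x)) := by
    rintro w (hw | hw)
    · exact hσ.between_iff hxy hw fun hxw => hx (.inl (hs.trans hxw hw))
    · have := hσ.between_iff hxy hw fun hxw => hx (.inr (hs.trans hxw hw))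
      omega
  exact (chord hw).trans (chord hw').symm

theorem isNoncrossing_joinBlocks (hσ : IsNoncrossing σ) (hpq : (q : ℕ) = p + 1) :
    IsNoncrossing (joinBlocks σ p q) := by
  rw [isNoncrossing_iff_between]
  intro x y u v hxy huv hxu h
  rw [sameBlock_joinBlocks] at hxy huv hxu
  rcases hxy with hxy | ⟨hx, hy⟩ <;> rcases huv with huv | ⟨hu, hv⟩
  · exact isNoncrossing_iff_between.1 hσ hxy huv (fun h => hxu (.inl h)) h
  · exact (hσ.between_iff_of_joined_points hpq hxy (fun hx => hxu (.inr ⟨hx, hu⟩)) hu hv).1 h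
  · exact (hσ.between_iff_of_joined_ends hpq hx hy huv fun hu => hxu (.inr ⟨hx, hu⟩)).1 h
  · exact absurd (.inr ⟨hx, hu⟩) hxu

lemma dualRel_joinBlocks_iff (hpq : (q : ℕ) = p + 1) {j k : Fin n} (hj : j ≠ p) (hk : k ≠ p) :
    dualRel (joinBlocks σ p q) j k ↔ dualRel σ j k := by
  rw [dualRel_iff, dualRel_iff]
  refine or_congr_right ⟨fun h x y hxy => h x y (sameBlock_joinBlocks.2 (.inl hxy)),
    fun h x y hxy => ?_⟩
  rcases sameBlock_joinBlocks.1 hxy with hxy | ⟨hx, hy⟩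
  · exact h x y hxy
  have hpq' : p ∈ cIoc j k ↔ q ∈ cIoc j k := by
    simp only [mem_cIoc]
    omega
  have hx' := hx.elim (h x p) fun hxq => (h x q hxq).trans hpq'.symm
  have hy' := hy.elim (h y p) fun hyq => (h y q hyq).trans hpq'.symm
  exact hx'.trans hy'.symm

lemma not_dualRel_joinBlocks (hpq : (q : ℕ) = p + 1) {j : Fin n} (hj : j ≠ p) :
    ¬ dualRel (joinBlocks σ p q) p j := by
  have hs := sameBlock_equivalence σ
  rw [dualRel_iff]
  rintro (rfl | h)
  · exact hj rfl
  have := h q p (sameBlock_joinBlocks.2 (.inr ⟨.inr (hs.refl q), .inl (hs.refl p)⟩))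
  simp only [mem_cIoc] at this
  omega

/-- The last point of the block of `q` before returning to `p` is dual to `p`. -/
lemma IsNoncrossing.exists_dualRel_ne (hσ : IsNoncrossing σ) (hpq : (q : ℕ) = p + 1)
    (hsep : ¬ sameBlock σ p q) : ∃ j ≠ p, dualRel σ p j := by
  have hs := sameBlock_equivalence σ
  have hC : ∀ x, x ∈ σ.part q ↔ sameBlock σ x q := fun x => σ.mem_part_iff_exists
  obtain ⟨j, hjC, hCj⟩ := exists_forall_mem_cIoc ⟨q, (hC q).2 (hs.refl q)⟩
    fun hp => hsep ((hC p).1 hp)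
  have hjq := (hC j).1 hjC
  have hjp : j ≠ p := by rintro rfl; exact hsep hjq
  refine ⟨j, hjp, dualRel_iff.2 (.inr fun x y hxy => ?_)⟩
  by_cases hxq : sameBlock σ x q
  · exact iff_of_true (hCj x ((hC x).2 hxq)) (hCj y ((hC y).2 (hs.trans (hs.symm hxy) hxq)))
  have hyq : ¬ sameBlock σ y q := fun hyq => hxq (hs.trans hxy hyq)
  have := hσ.between_iff (hs.symm hjq) hxy fun hqx => hxq (hs.symm hqx)
  have : x ≠ q := by rintro rfl; exact hxq (hs.refl x)
  have : y ≠ q := by rintro rfl; exact hyq (hs.refl y)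
  have : x ≠ j := by rintro rfl; exact hxq hjq
  have : y ≠ j := by rintro rfl; exact hyq hjq
  simp only [mem_cIoc]
  omega

end adjacent

def dualBlocks (σ : NCP n) : Finset (Finset (Fin n)) :=
  univ.image fun i => univ.filter (dualRel σ i)

section count

variable {σ : NCP n}

lemma IsNoncrossing.card_dualBlocks_joinBlocks (hσ : IsNoncrossing σ) {p q : Fin n}
    (hpq : (q : ℕ) = p + 1) (hsep : ¬ sameBlock σ p q) :
    #(dualBlocks (joinBlocks σ p q)) = #(dualBlocks σ) + 1 := by
  obtain ⟨j, hjp, hpj⟩ := hσ.exists_dualRel_ne hpq hsep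
  exact card_classes_of_isolate (dualRel_equivalence σ) (dualRel_equivalence _) hjp hpj
    (fun i h => by_contra fun hi => not_dualRel_joinBlocks hpq hi h)
    (fun i k hi hk => dualRel_joinBlocks_iff hpq hi hk)

lemma card_dualBlocks_of_card_parts_eq_one (h : #σ.parts = 1) : #(dualBlocks σ) = n := by
  obtain ⟨B, hB⟩ := card_eq_one.1 h
  have hpart : ∀ x, σ.part x = B := fun x => by
    simpa [hB] using σ.part_mem.2 (mem_univ x)
  have hdual : ∀ i, univ.filter (dualRel σ i) = {i} := fun i => by
    ext k
    simp only [mem_filter, mem_univ, true_and, mem_singleton, dualRel_iff]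
    refine ⟨fun h => ?_, fun h => .inl h.symm⟩
    rcases h with rfl | h
    · rfl
    by_contra hki
    have := h k i (sameBlock_iff_part_eq.2 ((hpart k).trans (hpart i).symm))
    simp only [mem_cIoc] at this
    omega
  rw [dualBlocks, image_congr fun i _ => hdual i, card_image_of_injective _ singleton_injective,
    card_univ, Fintype.card_fin]

lemma exists_adjacent_not_sameBlock (h : 1 < #σ.parts) :
    ∃ p q : Fin n, (q : ℕ) = p + 1 ∧ ¬ sameBlock σ p q := by
  obtain ⟨B, hB, C, hC, hBC⟩ := one_lt_card.1 h
  obtain ⟨x, hx⟩ := σ.nonempty_of_mem_parts hB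
  obtain ⟨y, hy⟩ := σ.nonempty_of_mem_parts hC
  obtain ⟨m, rfl⟩ : ∃ m, n = m + 1 := Nat.exists_eq_add_one_of_ne_zero x.pos.ne'
  by_contra! H
  have hs := sameBlock_equivalence σ
  have h0 : ∀ z, sameBlock σ 0 z := Fin.induction (hs.refl 0)
    fun i hi => hs.trans hi (H i.castSucc i.succ rfl)
  apply hBC
  rw [← σ.part_eq_of_mem hB hx, ← σ.part_eq_of_mem hC hy]
  exact sameBlock_iff_part_eq.1 (hs.trans (hs.symm (h0 x)) (h0 y))

theorem IsNoncrossing.card_parts_add_card_dualBlocks (hσ : IsNoncrossing σ) (hn : 0 < n) :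
    #σ.parts + #(dualBlocks σ) = n + 1 := by
  induction hk : #σ.parts using Nat.strong_induction_on generalizing σ with
  | _ k ih =>
    have hpos : 0 < #σ.parts :=
      card_pos.2 (σ.parts_nonempty (Finset.Nonempty.ne_empty ⟨⟨0, hn⟩, mem_univ _⟩))
    obtain rfl | hk1 : k = 1 ∨ 1 < k := by omega
    · rw [card_dualBlocks_of_card_parts_eq_one hk]
      omega
    obtain ⟨p, q, hpq, hsep⟩ := exists_adjacent_not_sameBlock (hk ▸ hk1)
    have h₁ := card_parts_joinBlocks hsep
    have h₂ := hσ.card_dualBlocks_joinBlocks hpq hsep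
    have h₃ := ih _ (by omega) (isNoncrossing_joinBlocks hσ hpq) rfl
    omega

end count

theorem stmt0 (n : ℕ) (hn : 0 < n) (σ : NCP n) (hσ : IsNoncrossing σ) :
    Equivalence (dualRel σ) ∧
    (∀ a b c d : Fin n, a < b → b < c → c < d →
      dualRel σ a c → dualRel σ b d → dualRel σ a b) ∧
    σ.parts.card +
      ((univ : Finset (Fin n)).image fun i => (univ : Finset (Fin n)).filter (dualRel σ i)).card
      = n + 1 :=
  ⟨dualRel_equivalence σ, fun _ _ _ _ => dualRel_noncrossing σ,
    hσ.card_parts_add_card_dualBlocks hn⟩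

end
end

section
/- Fix m ≥ 3 and work with m×m real matrices. For 2 ≤ i ≤ m−1 set u_i(t) = x_i(t)·y_{i−1}(t). Then: (0) x_i(t)·y_{i−1}(t) = y_{i−1}(t)·x_i(t), so u_i(t) = Id + t·(E_{i,i+1} + E_{i,i−1}); (1) u_i(a)·u_i(b) = u_i(a+b) for all reals a,b; (2) u_i(a)·u_j(b) = u_j(b)·u_i(a) whenever 2 ≤ i, j ≤ m−1 and |i−j| ≥ 2; (3) if 2 ≤ i and i+1 ≤ m−1 and a+c+abc ≠ 0, then u_i(a)·u_{i+1}(b)·u_i(c) = u_{i+1}(bc/(a+c+abc))·u_i(a+c+abc)·u_{i+1}(ab/(a+c+abc)), and likewise u_{i+1}(a)·u_i(b)·u_{i+1}(c) = u_i(bc/(a+c+abc))·u_{i+1}(a+c+abc)·u_i(ab/(a+c+abc)). -/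
open Finset

noncomputable section
open scoped Classical

/-!
Write `u_i(t) = 1 + t • e_i` with `e_i = E_{i,i+1} + E_{i,i-1}`. The `e_i` satisfy
`e_i² = 0`, `e_i e_j = 0` for `|i - j| ≥ 2`, and `e_i e_{i±1} e_i = e_i`, and these relations
alone give the claims in any algebra: `1 + t • e` is additive in `t` when `e² = 0`, and when
`e f e = e` the product `(1 + a • e)(1 + b • f)(1 + c • e)` collapses to
`1 + (a + c + abc) • e + b • f + ab • ef + bc • fe`; both sides of the braid relation have this
form with the same coefficients.
-/

section OneAddSmul

variable {R A : Type*} [CommSemiring R] [Semiring A] [Algebra R A]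

theorem one_add_smul_mul_one_add_smul {e : A} (he : e * e = 0) (a b : R) :
    (1 + a • e) * (1 + b • e) = 1 + (a + b) • e := by
  simp only [mul_add, add_mul, one_mul, mul_one, smul_mul_assoc, mul_smul_comm, he, smul_zero,
    add_zero]
  module

theorem Commute.one_add_smul {e f : A} (h : Commute e f) (a b : R) :
    Commute (1 + a • e) (1 + b • f) :=
  (Commute.one_left _).add_left ((Commute.one_right _).add_right ((h.smul_left a).smul_right b))

theorem one_add_smul_mul_one_add_smul_mul_one_add_smul {e f : A} (he : e * e = 0)
    (hefe : e * f * e = e) (a b c : R) :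
    (1 + a • e) * (1 + b • f) * (1 + c • e) =
      1 + (a + c + a * b * c) • e + b • f + (a * b) • (e * f) + (b * c) • (f * e) := by
  have hefe' : e * (f * e) = e := by rw [← mul_assoc, hefe]
  simp only [mul_add, add_mul, one_mul, mul_one, smul_mul_assoc, mul_smul_comm, mul_assoc, he,
    hefe', smul_zero, add_zero]
  module

end OneAddSmul

theorem one_add_smul_braid {R A : Type*} [Field R] [Semiring A] [Algebra R A] {e f : A}
    (he : e * e = 0) (hf : f * f = 0) (hefe : e * f * e = e) (hfef : f * e * f = f)
    {a b c : R} (hs : a + c + a * b * c ≠ 0) :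
    (1 + a • e) * (1 + b • f) * (1 + c • e) =
      (1 + (b * c / (a + c + a * b * c)) • f) * (1 + (a + c + a * b * c) • e) *
        (1 + (a * b / (a + c + a * b * c)) • f) := by
  set s := a + c + a * b * c
  rw [one_add_smul_mul_one_add_smul_mul_one_add_smul he hefe,
    one_add_smul_mul_one_add_smul_mul_one_add_smul hf hfef]
  have h₁ : b * c / s + a * b / s + b * c / s * s * (a * b / s) = b := by
    field_simp
    ring
  have h₂ : b * c / s * s = b * c := div_mul_cancel₀ _ hs
  have h₃ : s * (a * b / s) = a * b := mul_div_cancel₀ _ hs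
  rw [h₁, h₂, h₃]
  abel

section MatrixUnits

variable {m : ℕ}

theorem matE_mul_matE_of_ne {p q r s : ℕ} (t u : ℝ) (h : q ≠ r) :
    matE m p q t * matE m r s u = 0 := by
  ext x y
  simp only [matE, Matrix.mul_apply, Matrix.of_apply, Matrix.zero_apply]
  refine Finset.sum_eq_zero fun k _ => ?_
  split_ifs <;> simp_all

theorem matE_mul_matE {p q s : ℕ} (t u : ℝ) (hq : q < m) :
    matE m p q t * matE m q s u = matE m p s (t * u) := by
  ext x y
  simp only [matE, Matrix.mul_apply, Matrix.of_apply]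
  rw [Finset.sum_eq_single ⟨q, hq⟩]
  · split_ifs <;> simp_all
  · intro k _ hk
    have : (k : ℕ) ≠ q := fun hkq => hk (Fin.ext hkq)
    split_ifs <;> simp_all
  · simp

theorem matE_eq_smul (p q : ℕ) (t : ℝ) : matE m p q t = t • matE m p q 1 := by
  ext x y
  simp only [matE, Matrix.of_apply, Matrix.smul_apply, smul_eq_mul]
  split_ifs <;> simp

end MatrixUnits

-- `matE` is 0-based: this is `E_{i,i+1} + E_{i,i-1}` in the 1-based indexing of `xB`, `yB`.
def elecGen (m i : ℕ) : Matrix (Fin m) (Fin m) ℝ := matE m (i-1) i 1 + matE m (i-1) (i-2) 1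

section ElectricalGenerators

variable {m i : ℕ}

theorem xB_commute_yB (hi : 2 ≤ i) (t : ℝ) : Commute (xB m i t) (yB m (i-1) t) := by
  have h : Commute (matE m (i-1) i t) (matE m (i-1) (i-1-1) t) :=
    (matE_mul_matE_of_ne _ _ (by omega)).trans (matE_mul_matE_of_ne _ _ (by omega)).symm
  exact (Commute.one_left _).add_left ((Commute.one_right _).add_right h)

theorem uB_eq (hi : 2 ≤ i) (t : ℝ) :
    uB m i t = 1 + matE m (i-1) i t + matE m (i-1) (i-2) t := by
  rw [uB, xB, yB, show i - 1 - 1 = i - 2 by omega]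
  simp only [mul_add, add_mul, one_mul, mul_one,
    matE_mul_matE_of_ne _ _ (show i ≠ i - 1 by omega), add_zero, add_assoc]

theorem uB_eq_one_add_smul (hi : 2 ≤ i) (t : ℝ) : uB m i t = 1 + t • elecGen m i := by
  rw [uB_eq hi, elecGen, smul_add, ← matE_eq_smul, ← matE_eq_smul, add_assoc]

theorem elecGen_mul_self (hi : 2 ≤ i) : elecGen m i * elecGen m i = 0 := by
  simp (disch := omega) only [elecGen, mul_add, add_mul, matE_mul_matE_of_ne, add_zero]

theorem elecGen_mul_elecGen_of_far {j : ℕ} (hi : 2 ≤ i) (hj : 2 ≤ j)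
    (hij : i + 2 ≤ j ∨ j + 2 ≤ i) :
    elecGen m i * elecGen m j = 0 := by
  simp (disch := omega) only [elecGen, mul_add, add_mul, matE_mul_matE_of_ne, add_zero]

theorem elecGen_mul_elecGen_succ_mul_elecGen (hi : 2 ≤ i) (him : i < m) :
    elecGen m i * elecGen m (i+1) * elecGen m i = elecGen m i := by
  have hsub : i + 1 - 2 = i - 1 := by omega
  simp (disch := omega) only [elecGen, Nat.add_sub_cancel, hsub, mul_add, add_mul,
    matE_mul_matE_of_ne, matE_mul_matE, add_zero, zero_add, mul_one]

theorem elecGen_succ_mul_elecGen_mul_elecGen_succ (hi : 2 ≤ i) (him : i < m) :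
    elecGen m (i+1) * elecGen m i * elecGen m (i+1) = elecGen m (i+1) := by
  have hsub : i + 1 - 2 = i - 1 := by omega
  simp (disch := omega) only [elecGen, Nat.add_sub_cancel, hsub, mul_add, add_mul,
    matE_mul_matE_of_ne, matE_mul_matE, add_zero, zero_add, mul_one]

end ElectricalGenerators

theorem stmt3_general (m : ℕ) :
    (∀ (i : ℕ) (t : ℝ), 2 ≤ i → i ≤ m - 1 →
      xB m i t * yB m (i-1) t = yB m (i-1) t * xB m i t) ∧
    (∀ (i : ℕ) (t : ℝ), 2 ≤ i → i ≤ m - 1 →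
      uB m i t = 1 + matE m (i-1) i t + matE m (i-1) (i-2) t) ∧
    (∀ (i : ℕ) (a b : ℝ), 2 ≤ i → i ≤ m - 1 →
      uB m i a * uB m i b = uB m i (a+b)) ∧
    (∀ (i j : ℕ) (a b : ℝ), 2 ≤ i → i ≤ m - 1 → 2 ≤ j → j ≤ m - 1 →
      (i + 2 ≤ j ∨ j + 2 ≤ i) →
      uB m i a * uB m j b = uB m j b * uB m i a) ∧
    (∀ (i : ℕ) (a b c : ℝ), 2 ≤ i → i + 1 ≤ m - 1 → a + c + a*b*c ≠ 0 →
      (uB m i a * uB m (i+1) b * uB m i c =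
        uB m (i+1) (b*c/(a+c+a*b*c)) * uB m i (a+c+a*b*c) * uB m (i+1) (a*b/(a+c+a*b*c))) ∧
      (uB m (i+1) a * uB m i b * uB m (i+1) c =
        uB m i (b*c/(a+c+a*b*c)) * uB m (i+1) (a+c+a*b*c) * uB m i (a*b/(a+c+a*b*c)))) := by
  refine ⟨fun i t hi _ => (xB_commute_yB hi t).eq, fun i t hi _ => uB_eq hi t, ?_, ?_, ?_⟩
  · intro i a b hi _
    simp only [uB_eq_one_add_smul hi, one_add_smul_mul_one_add_smul (elecGen_mul_self hi)]
  · intro i j a b hi _ hj _ hij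
    have hcomm : Commute (elecGen m i) (elecGen m j) :=
      (elecGen_mul_elecGen_of_far hi hj hij).trans
        (elecGen_mul_elecGen_of_far hj hi hij.symm).symm
    simp only [uB_eq_one_add_smul hi, uB_eq_one_add_smul hj]
    exact (hcomm.one_add_smul a b).eq
  · intro i a b c hi him hs
    have hi' : 2 ≤ i + 1 := by omega
    simp only [uB_eq_one_add_smul hi, uB_eq_one_add_smul hi']
    have hee := elecGen_mul_self (m := m) hi
    have hff := elecGen_mul_self (m := m) hi'
    have hefe := elecGen_mul_elecGen_succ_mul_elecGen (m := m) hi (by omega)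
    have hfef := elecGen_succ_mul_elecGen_mul_elecGen_succ (m := m) hi (by omega)
    exact ⟨one_add_smul_braid hee hff hefe hfef hs, one_add_smul_braid hff hee hfef hefe hs⟩

theorem stmt3 (m : ℕ) (hm : 3 ≤ m) :
    (∀ (i : ℕ) (t : ℝ), 2 ≤ i → i ≤ m - 1 →
      xB m i t * yB m (i-1) t = yB m (i-1) t * xB m i t) ∧
    (∀ (i : ℕ) (t : ℝ), 2 ≤ i → i ≤ m - 1 →
      uB m i t = 1 + matE m (i-1) i t + matE m (i-1) (i-2) t) ∧
    (∀ (i : ℕ) (a b : ℝ), 2 ≤ i → i ≤ m - 1 →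
      uB m i a * uB m i b = uB m i (a+b)) ∧
    (∀ (i j : ℕ) (a b : ℝ), 2 ≤ i → i ≤ m - 1 → 2 ≤ j → j ≤ m - 1 →
      (i + 2 ≤ j ∨ j + 2 ≤ i) →
      uB m i a * uB m j b = uB m j b * uB m i a) ∧
    (∀ (i : ℕ) (a b c : ℝ), 2 ≤ i → i + 1 ≤ m - 1 → a + c + a*b*c ≠ 0 →
      (uB m i a * uB m (i+1) b * uB m i c =
        uB m (i+1) (b*c/(a+c+a*b*c)) * uB m i (a+c+a*b*c) * uB m (i+1) (a*b/(a+c+a*b*c))) ∧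
      (uB m (i+1) a * uB m i b * uB m (i+1) c =
        uB m i (b*c/(a+c+a*b*c)) * uB m (i+1) (a+c+a*b*c) * uB m i (a*b/(a+c+a*b*c)))) :=
  stmt3_general m

end
end

section
/- Let τ be a matching of [2n]. Then there exists w ∈ S̃_{2n}^0 such that g_τ = w·g_0·w^{−1}, where ℓ(w) = n(n−1)/2 − c(τ) and ℓ(g_τ) = 2·ℓ(w). -/
open Finset

noncomputable section
open scoped Classical

/-!
Order the window `[0, 2n)` by listing the `n` openers of `τ` (points `a` with `a < τ a`)
increasingly, followed by the closers, ordered like their partners. The affine permutation `w`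
whose window reads off this order conjugates `· + n` to `g_τ`: the `k`-th opener sits at
position `k` and its partner at position `k + n`, and `g_τ` sends an opener to its partner and a
closer to its partner one period up.

Inversions of `w` correspond to the pairs of arcs that are nested or aligned (disjoint), so
`ℓ(w) = C(n, 2) - c(τ)`. The affine inversions of `g_τ` starting in the window and ending in
the same period are the nestings, counted once at their openers and once at their closers,
together with the alignments; those ending one period up are the alignments again. Hence
`ℓ(g_τ) = 2 ℓ(w)`.
-/

section Inversions

variable {α β : Type*} [Fintype α] [LinearOrder α] [LinearOrder β]

def inversions (f : α → β) : Finset (α × α) := {p | p.1 < p.2 ∧ f p.2 < f p.1}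

lemma inversions_strictMono_comp {γ : Type*} [LinearOrder γ] {g : β → γ} (hg : StrictMono g)
    (f : α → β) : inversions (g ∘ f) = inversions f := by
  ext p
  simp [inversions, hg.lt_iff_lt]

lemma card_inversions_symm (σ : Equiv.Perm α) : #(inversions σ.symm) = #(inversions σ) := by
  refine Finset.card_nbij' (fun p => (σ.symm p.2, σ.symm p.1)) (fun p => (σ p.2, σ p.1))
    ?_ ?_ (fun _ _ => by simp) (fun _ _ => by simp) <;>
  · rintro ⟨x, y⟩ h
    simp_all [inversions]

end Inversions

section AffineExtension

variable {m : ℕ}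

def affExt (m : ℕ) (u : Fin m → ℤ) (x : ℤ) : ℤ :=
  if h : (x % (m : ℤ)).toNat < m then x - x % (m : ℤ) + u ⟨(x % (m : ℤ)).toNat, h⟩ else x

lemma affExt_apply (u : Fin m → ℤ) (r : Fin m) (k : ℤ) :
    affExt m u (r + m * k) = u r + m * k := by
  have hmod : (((r : ℕ) : ℤ) + m * k) % m = r := by
    rw [Int.add_mul_emod_self_left, Int.emod_eq_of_lt (by positivity) (by exact_mod_cast r.isLt)]
  simp only [affExt, hmod, Int.toNat_natCast, r.isLt, dite_true, Fin.eta]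
  ring

lemma affExt_coe (u : Fin m → ℤ) (r : Fin m) : affExt m u r = u r := by
  simpa using affExt_apply u r 0

lemma windowSum_eq_sum_fin {f : ℤ → ℤ} (hf : ∀ x, f (x + m) = f x + m) :
    windowSum m f = ∑ r : Fin m, (f r - r) := by
  set G : ℕ → ℤ := fun j => f j - j
  have hG : G m = G 0 := by have := hf 0; simp only [zero_add] at this; simp [G, this]
  have h := (Finset.sum_range_succ' G m).symm.trans (Finset.sum_range_succ G m)
  rw [hG, add_right_cancel_iff] at h
  rw [Fin.sum_univ_eq_sum_range G, ← h]
  simp [windowSum, G]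

variable [NeZero m]

lemma exists_eq_add_mul (x : ℤ) : ∃ (r : Fin m) (k : ℤ), x = r + m * k := by
  have hm : (0 : ℤ) < m := by exact_mod_cast Nat.pos_of_neZero m
  refine ⟨⟨(x % m).toNat, by have := Int.emod_lt_of_pos x hm; omega⟩, x / m, ?_⟩
  rw [Fin.val_mk, Int.toNat_of_nonneg (Int.emod_nonneg x hm.ne'), Int.emod_add_mul_ediv]

lemma affExt_add_mul (u : Fin m → ℤ) (x k : ℤ) :
    affExt m u (x + m * k) = affExt m u x + m * k := by
  obtain ⟨r, j, rfl⟩ := exists_eq_add_mul (m := m) x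
  rw [add_assoc, ← mul_add, affExt_apply, affExt_apply]
  ring

lemma affExt_add_period (u : Fin m → ℤ) (x : ℤ) : affExt m u (x + m) = affExt m u x + m := by
  simpa using affExt_add_mul u x 1

lemma affExt_comp_perm (u : Fin m → ℤ) (σ : Equiv.Perm (Fin m)) (x : ℤ) :
    affExt m u (affExt m (fun r => (σ r : ℕ)) x) = affExt m (fun r => u (σ r)) x := by
  obtain ⟨r, k, rfl⟩ := exists_eq_add_mul (m := m) x
  rw [affExt_apply, affExt_apply, affExt_apply]

lemma affExt_val (x : ℤ) : affExt m (fun r => (r : ℕ)) x = x := by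
  obtain ⟨r, k, rfl⟩ := exists_eq_add_mul (m := m) x
  rw [affExt_apply]

lemma isAffinePerm_affExt (σ : Equiv.Perm (Fin m)) :
    IsAffinePerm m (affExt m fun r => (σ r : ℕ)) := by
  refine ⟨Function.bijective_iff_has_inverse.mpr
    ⟨affExt m fun r => (σ.symm r : ℕ), fun x => ?_, fun x => ?_⟩, affExt_add_period _⟩
  · rw [affExt_comp_perm]; simpa using affExt_val x
  · rw [affExt_comp_perm]; simpa using affExt_val x

lemma windowSum_affExt_perm (σ : Equiv.Perm (Fin m)) :
    windowSum m (affExt m fun r => (σ r : ℕ)) = 0 := by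
  rw [windowSum_eq_sum_fin (affExt_add_period _)]
  simp only [affExt_coe, Finset.sum_sub_distrib]
  rw [Equiv.sum_comp σ (fun r => ((r : ℕ) : ℤ)), sub_self]

end AffineExtension

section AffineLength

variable {m : ℕ}

lemma affLen_eq_ncard_window {f : ℤ → ℤ} (hf : ∀ x, f (x + m) = f x + m) :
    affLen m f = {p : ℤ × ℤ | 0 ≤ p.1 ∧ p.1 < m ∧ p.1 < p.2 ∧ f p.2 < f p.1}.ncard := by
  have hf' : ∀ x, f (x - m) = f x - m := fun x => by
    have := hf (x - m); simp only [sub_add_cancel] at this; omega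
  refine Set.ncard_congr (fun p _ => if p.1 = m then (p.1 - m, p.2 - m) else p) ?_ ?_ ?_
  · rintro ⟨i, j⟩ ⟨h1, h2, h3, h4⟩
    dsimp only at *
    split_ifs with hi
    · refine ⟨by omega, by omega, by omega, ?_⟩
      dsimp only
      rw [hf', hf']
      omega
    · exact ⟨by omega, by omega, h3, h4⟩
  · rintro ⟨i, j⟩ ⟨i', j'⟩ ⟨h1, -⟩ ⟨h1', -⟩ h
    dsimp only at h
    split_ifs at h <;> simp only [Prod.mk.injEq] at h ⊢ <;> omega
  · rintro ⟨i, j⟩ ⟨h1, h2, h3, h4⟩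
    by_cases hi : i = 0
    · refine ⟨(i + m, j + m), ⟨by omega, by omega, by omega, by simpa [hf] using h4⟩, ?_⟩
      simp [hi]
    · exact ⟨(i, j), ⟨by omega, h2.le, h3, h4⟩, by simp; omega⟩

variable [NeZero m]

lemma window_inversions_affExt (u : Fin m → ℤ) (hu : ∀ r, 0 ≤ u r ∧ u r < 2 * m) :
    {p : ℤ × ℤ | 0 ≤ p.1 ∧ p.1 < m ∧ p.1 < p.2 ∧ affExt m u p.2 < affExt m u p.1} =
      (fun p : Fin m × Fin m => (((p.1 : ℕ) : ℤ), ((p.2 : ℕ) : ℤ))) '' ↑(inversions u) ∪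
      (fun p : Fin m × Fin m => (((p.1 : ℕ) : ℤ), ((p.2 : ℕ) : ℤ) + m)) ''
        ↑({p | u p.2 + m < u p.1} : Finset (Fin m × Fin m)) := by
  have hm : (0 : ℤ) < m := by exact_mod_cast Nat.pos_of_neZero m
  ext ⟨i, j⟩
  constructor
  · rintro ⟨h1, h2, h3, h4⟩
    obtain ⟨p, rfl⟩ : ∃ p : Fin m, i = p := ⟨⟨i.toNat, by omega⟩, by simp; omega⟩
    obtain ⟨q, k, rfl⟩ := exists_eq_add_mul (m := m) j
    dsimp only at h3 h4
    rw [affExt_apply, affExt_coe] at h4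
    have hq := q.isLt
    obtain ⟨hp0, hp1⟩ := hu p
    obtain ⟨hq0, hq1⟩ := hu q
    have hk0 : 0 ≤ k := by
      by_contra hk; have : m * k ≤ -m := by nlinarith
      omega
    have hk1 : k < 2 := by
      by_contra hk; have : 2 * m ≤ m * k := by nlinarith
      omega
    interval_cases k
    · left; exact ⟨(p, q), by simp [inversions]; omega, by simp⟩
    · right; exact ⟨(p, q), by simp; omega, by simp⟩
  · rintro (⟨⟨p, q⟩, h, he⟩ | ⟨⟨p, q⟩, h, he⟩) <;>
      simp only [Prod.mk.injEq] at he <;> obtain ⟨rfl, rfl⟩ := he <;>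
      simp only [Finset.coe_filter, inversions, Finset.mem_univ, true_and,
        Set.mem_ofPred_eq] at h <;> have := q.isLt <;> have := p.isLt
    · refine ⟨by omega, by omega, by omega, ?_⟩
      rw [affExt_coe, affExt_coe]; exact h.2
    · refine ⟨by omega, by omega, by omega, ?_⟩
      simpa [affExt_coe, affExt_add_period] using h

lemma affLen_affExt (u : Fin m → ℤ) (hu : ∀ r, 0 ≤ u r ∧ u r < 2 * m) :
    affLen m (affExt m u) =
      #(inversions u) + #({p | u p.2 + m < u p.1} : Finset (Fin m × Fin m)) := by
  rw [affLen_eq_ncard_window (affExt_add_period u), window_inversions_affExt u hu,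
    Set.ncard_union_eq ?_ (Set.toFinite _) (Set.toFinite _),
    Set.ncard_image_of_injective _ fun p q h => by simpa [Prod.ext_iff, Fin.val_inj] using h,
    Set.ncard_image_of_injective _ fun p q h => by simpa [Prod.ext_iff, Fin.val_inj] using h,
    Set.ncard_coe_finset, Set.ncard_coe_finset]
  rw [Set.disjoint_left]
  rintro _ ⟨p, -, rfl⟩ ⟨q, -, h⟩
  simp only [Prod.mk.injEq] at h
  have := p.2.isLt
  omega

end AffineLength

namespace IsMatching

variable {m : ℕ} {τ : Fin m → Fin m}

lemma tau_tau (hτ : IsMatching τ) (a : Fin m) : τ (τ a) = a := hτ.1 a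

lemma tau_lt_of_not_lt (hτ : IsMatching τ) {a : Fin m} (ha : ¬ a < τ a) : τ a < a :=
  lt_of_le_of_ne (not_lt.1 ha) (hτ.2 a)

end IsMatching

section Arcs

variable {m : ℕ} {τ : Fin m → Fin m}

def openers (τ : Fin m → Fin m) : Finset (Fin m) := {a | a < τ a}

@[simp] lemma mem_openers {a : Fin m} : a ∈ openers τ ↔ a < τ a := by simp [openers]

lemma two_mul_card_openers (hτ : IsMatching τ) : 2 * #(openers τ) = m := by
  have hclosers : #({a | ¬ a < τ a} : Finset (Fin m)) = #(openers τ) :=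
    Finset.card_nbij' τ τ
      (fun a ha => by
        simp only [openers, Finset.coe_filter, Finset.mem_univ, true_and, Set.mem_ofPred_eq] at ha ⊢
        rw [hτ.tau_tau]; exact hτ.tau_lt_of_not_lt ha)
      (fun a ha => by
        simp only [openers, Finset.coe_filter, Finset.mem_univ, true_and, Set.mem_ofPred_eq] at ha ⊢
        rw [hτ.tau_tau]; exact not_lt.2 ha.le)
      (fun a _ => hτ.tau_tau a) (fun a _ => hτ.tau_tau a)
  have := Finset.card_filter_add_card_filter_not (s := univ) (fun a : Fin m => a < τ a)
  simp only [Finset.card_univ, Fintype.card_fin] at this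
  rw [openers] at hclosers ⊢
  omega

def openerRank (τ : Fin m → Fin m) (a : Fin m) : ℕ := #{b ∈ openers τ | b < a}

lemma openerRank_lt_openerRank {a b : Fin m} (ha : a ∈ openers τ) (hab : a < b) :
    openerRank τ a < openerRank τ b := by
  refine Finset.card_lt_card ((Finset.ssubset_iff_of_subset fun x hx => ?_).2 ⟨a, ?_, ?_⟩)
  · simp only [Finset.mem_filter] at hx ⊢
    exact ⟨hx.1, hx.2.trans hab⟩
  · simp [ha, hab]
  · simp

lemma openerRank_strictMonoOn : StrictMonoOn (openerRank τ) (openers τ) :=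
  fun _ ha _ _ hab => openerRank_lt_openerRank ha hab

lemma openerRank_lt_card {a : Fin m} (ha : a ∈ openers τ) : openerRank τ a < #(openers τ) :=
  Finset.card_lt_card <| Finset.filter_ssubset.2 ⟨a, ha, lt_irrefl a⟩

def arcIndex (τ : Fin m → Fin m) (a : Fin m) : ℕ :=
  if a < τ a then openerRank τ a else #(openers τ) + openerRank τ (τ a)

lemma arcIndex_lt (hτ : IsMatching τ) (a : Fin m) : arcIndex τ a < m := by
  have := two_mul_card_openers hτ
  unfold arcIndex
  split_ifs with ha
  · have := openerRank_lt_card (τ := τ) (a := a) (mem_openers.2 ha)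
    omega
  · have := openerRank_lt_card (τ := τ) (a := τ a)
      (by simpa [hτ.tau_tau] using hτ.tau_lt_of_not_lt ha)
    omega

lemma arcIndex_injective (hτ : IsMatching τ) : Function.Injective (arcIndex τ) := by
  intro a b h
  unfold arcIndex at h
  split_ifs at h with ha hb hb
  · exact openerRank_strictMonoOn.injOn (mem_openers.2 ha) (mem_openers.2 hb) h
  · have := openerRank_lt_card (mem_openers.2 ha); omega
  · have := openerRank_lt_card (mem_openers.2 hb); omega
  · refine hτ.1.injective ((openerRank_strictMonoOn (τ := τ)).injOn ?_ ?_ (by omega)) <;>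
      simpa [hτ.tau_tau] using hτ.tau_lt_of_not_lt ‹_›

def arcPerm (hτ : IsMatching τ) : Equiv.Perm (Fin m) :=
  Equiv.ofBijective (fun a => ⟨arcIndex τ a, arcIndex_lt hτ a⟩)
    (Finite.injective_iff_bijective.mp fun _ _ h => arcIndex_injective hτ (Fin.val_eq_of_eq h))

lemma arcPerm_val (hτ : IsMatching τ) (a : Fin m) : (arcPerm hτ a : ℕ) = arcIndex τ a := rfl

lemma arcIndex_tau (hτ : IsMatching τ) {a : Fin m} (ha : a < τ a) :
    arcIndex τ (τ a) = arcIndex τ a + #(openers τ) := by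
  rw [arcIndex, arcIndex, if_neg (by rw [hτ.tau_tau]; exact not_lt.2 ha.le), if_pos ha,
    hτ.tau_tau, add_comm]

end Arcs

section ArcConfigurations

variable {m : ℕ} {τ : Fin m → Fin m}

def nestings (τ : Fin m → Fin m) : Finset (Fin m × Fin m) :=
  {p | p.1 < p.2 ∧ p.2 < τ p.2 ∧ τ p.2 < τ p.1}

def alignments (τ : Fin m → Fin m) : Finset (Fin m × Fin m) :=
  {p | p.1 < τ p.1 ∧ τ p.1 < p.2 ∧ p.2 < τ p.2}

/- The same configurations recorded by other endpoints: a nesting by its two closers, an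
alignment by the closer of its first arc and the opener of its second. This is how they show up
as inversions of the windows below. -/
def nestingsByClosers (τ : Fin m → Fin m) : Finset (Fin m × Fin m) :=
  {p | p.1 < p.2 ∧ τ p.1 < p.1 ∧ τ p.2 < τ p.1}

def alignmentsByInnerEnds (τ : Fin m → Fin m) : Finset (Fin m × Fin m) :=
  {p | τ p.1 < p.1 ∧ p.1 < p.2 ∧ p.2 < τ p.2}

lemma card_nestingsByClosers (hτ : IsMatching τ) :
    #(nestingsByClosers τ) = #(nestings τ) := by
  refine Finset.card_nbij' (fun p => (τ p.2, τ p.1)) (fun p => (τ p.2, τ p.1)) ?_ ?_ ?_ ?_ <;>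
  · rintro ⟨s, t⟩ h
    simp_all [nestings, nestingsByClosers, hτ.tau_tau]
    try omega

lemma card_alignmentsByInnerEnds (hτ : IsMatching τ) :
    #(alignmentsByInnerEnds τ) = #(alignments τ) := by
  refine Finset.card_nbij' (fun p => (τ p.1, p.2)) (fun p => (τ p.1, p.2)) ?_ ?_ ?_ ?_ <;>
  · rintro ⟨s, t⟩ h
    simp_all [alignments, alignmentsByInnerEnds, hτ.tau_tau]
    try omega

lemma crossNum_add_card_nestings_add_card_alignments (hτ : IsMatching τ) :
    crossNum τ + #(nestings τ) + #(alignments τ) = (#(openers τ)).choose 2 := by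
  rw [← Finset.card_product_filter_lt, crossNum, ← Finset.card_union_of_disjoint,
    ← Finset.card_union_of_disjoint]
  · congr 1
    ext ⟨a, b⟩
    have hab : a ≠ b → τ a ≠ τ b := fun h h' => h (hτ.1.injective h')
    have hτa : τ a = b → τ b = a := fun h => h ▸ hτ.tau_tau a
    simp only [nestings, alignments, Finset.mem_union, Finset.mem_filter, Finset.mem_univ,
      true_and, Finset.mem_product, mem_openers]
    omega
  all_goals
    rw [Finset.disjoint_left]
    rintro ⟨a, b⟩ h h'
    simp only [nestings, alignments, Finset.mem_union, Finset.mem_filter, Finset.mem_univ,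
      true_and] at h h'
    omega

end ArcConfigurations

section WindowInversions

variable {m : ℕ} {τ : Fin m → Fin m}

lemma inversions_arcIndex (hτ : IsMatching τ) :
    inversions (arcIndex τ) = alignmentsByInnerEnds τ ∪ nestingsByClosers τ := by
  ext ⟨s, t⟩
  have hrank {a b : Fin m} (ha : a < τ a) (hb : b < τ b) :
      openerRank τ a < openerRank τ b ↔ a < b :=
    openerRank_strictMonoOn.lt_iff_lt (mem_openers.2 ha) (mem_openers.2 hb)
  have hcard {a : Fin m} (ha : a < τ a) := openerRank_lt_card (mem_openers.2 ha)
  have hτs := hτ.2 s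
  have hτt := hτ.2 t
  simp only [inversions, alignmentsByInnerEnds, nestingsByClosers, Finset.mem_union,
    Finset.mem_filter_univ]
  unfold arcIndex
  split_ifs with hs ht ht
  · have := hrank ht hs; omega
  · have := hcard hs; omega
  · have := hcard ht; omega
  · have := hrank (a := τ t) (b := τ s)
      (by rw [hτ.tau_tau]; exact hτ.tau_lt_of_not_lt ‹¬ t < τ t›)
      (by rw [hτ.tau_tau]; exact hτ.tau_lt_of_not_lt ‹¬ s < τ s›)
    omega

lemma card_inversions_arcPerm (hτ : IsMatching τ) :
    #(inversions (arcPerm hτ)) = #(nestings τ) + #(alignments τ) := by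
  have hdisj : Disjoint (alignmentsByInnerEnds τ) (nestingsByClosers τ) := by
    rw [Finset.disjoint_left]
    rintro ⟨s, t⟩ h h'
    simp only [alignmentsByInnerEnds, nestingsByClosers, Finset.mem_filter, Finset.mem_univ,
      true_and] at h h'
    omega
  rw [← inversions_strictMono_comp Fin.val_strictMono, show Fin.val ∘ arcPerm hτ = arcIndex τ
    from rfl, inversions_arcIndex hτ, Finset.card_union_of_disjoint hdisj,
    card_alignmentsByInnerEnds hτ, card_nestingsByClosers hτ, add_comm]

def matchingWindow (τ : Fin m → Fin m) (a : Fin m) : ℤ :=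
  if a < τ a then ((τ a : ℕ) : ℤ) else ((τ a : ℕ) : ℤ) + m

lemma matchingWindow_bounds (a : Fin m) :
    0 ≤ matchingWindow τ a ∧ matchingWindow τ a < 2 * m := by
  have := (τ a).isLt
  unfold matchingWindow
  split_ifs <;> omega

lemma inversions_matchingWindow (hτ : IsMatching τ) :
    inversions (matchingWindow τ) =
      nestings τ ∪ alignmentsByInnerEnds τ ∪ nestingsByClosers τ := by
  ext ⟨s, t⟩
  have hτs := hτ.2 s
  have hτt := hτ.2 t
  have := (τ s).isLt
  have := (τ t).isLt
  simp only [inversions, nestings, alignmentsByInnerEnds, nestingsByClosers, Finset.mem_union,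
    Finset.mem_filter_univ]
  unfold matchingWindow
  split_ifs <;> omega

lemma card_inversions_matchingWindow (hτ : IsMatching τ) :
    #(inversions (matchingWindow τ)) = 2 * #(nestings τ) + #(alignments τ) := by
  rw [inversions_matchingWindow hτ, Finset.card_union_of_disjoint, Finset.card_union_of_disjoint,
    card_alignmentsByInnerEnds hτ, card_nestingsByClosers hτ]
  · ring
  all_goals
    rw [Finset.disjoint_left]
    rintro ⟨s, t⟩ h h'
    simp only [nestings, alignmentsByInnerEnds, nestingsByClosers, Finset.mem_union,
      Finset.mem_filter, Finset.mem_univ, true_and] at h h'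
    omega

lemma card_shifted_inversions_matchingWindow (hτ : IsMatching τ) :
    #({p | matchingWindow τ p.2 + m < matchingWindow τ p.1} : Finset (Fin m × Fin m)) =
      #(alignments τ) := by
  refine Finset.card_nbij' (fun p => (p.2, τ p.1)) (fun p => (τ p.2, p.1)) ?_ ?_
    (fun _ _ => by simp [hτ.tau_tau]) (fun _ _ => by simp [hτ.tau_tau])
  · rintro ⟨s, t⟩ h
    have := (τ s).isLt
    have := (τ t).isLt
    have := hτ.2 s
    simp only [alignments, Finset.coe_filter, Finset.mem_univ, true_and, Set.mem_ofPred_eq,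
      hτ.tau_tau] at h ⊢
    unfold matchingWindow at h
    split_ifs at h <;> omega
  · rintro ⟨a, b⟩ h
    simp only [alignments, Finset.coe_filter, Finset.mem_univ, true_and, Set.mem_ofPred_eq] at h ⊢
    unfold matchingWindow
    rw [if_pos h.1, if_neg (by rw [hτ.tau_tau]; exact not_lt.2 h.2.2.le), hτ.tau_tau]
    omega

end WindowInversions

section Conjugator

variable {m : ℕ} {τ : Fin m → Fin m}

def matchingConjugator (hτ : IsMatching τ) : ℤ → ℤ :=
  affExt m fun r => ((arcPerm hτ).symm r : ℕ)

lemma matchingConjugator_arcPerm (hτ : IsMatching τ) (a : Fin m) :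
    matchingConjugator hτ (arcPerm hτ a : ℕ) = (a : ℕ) := by
  rw [matchingConjugator, affExt_coe, Equiv.symm_apply_apply]

variable [NeZero m]

lemma matchingConjugator_add_mul (hτ : IsMatching τ) (x k : ℤ) :
    matchingConjugator hτ (x + m * k) = matchingConjugator hτ x + m * k :=
  affExt_add_mul _ x k

lemma matchingConjugator_arcIndex_add (hτ : IsMatching τ) (a : Fin m) :
    matchingConjugator hτ (arcIndex τ a + #(openers τ) : ℕ) = matchingWindow τ a := by
  by_cases ha : a < τ a
  · rw [← arcIndex_tau hτ ha, ← arcPerm_val hτ, matchingConjugator_arcPerm, matchingWindow,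
      if_pos ha]
  · have hτa : τ a < τ (τ a) := by rw [hτ.tau_tau]; exact hτ.tau_lt_of_not_lt ha
    have h2 := two_mul_card_openers hτ
    have hidx : ((arcIndex τ a + #(openers τ) : ℕ) : ℤ) = arcPerm hτ (τ a) + m * 1 := by
      have := arcIndex_tau hτ hτa
      rw [hτ.tau_tau] at this
      rw [arcPerm_val]
      omega
    rw [hidx, matchingConjugator_add_mul, matchingConjugator_arcPerm, matchingWindow, if_neg ha,
      mul_one]

lemma affExt_matchingWindow_matchingConjugator (hτ : IsMatching τ) (i : ℤ) :
    affExt m (matchingWindow τ) (matchingConjugator hτ i) =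
      matchingConjugator hτ (i + #(openers τ)) := by
  obtain ⟨r, k, rfl⟩ := exists_eq_add_mul (m := m) i
  obtain ⟨a, rfl⟩ := (arcPerm hτ).surjective r
  rw [add_right_comm, matchingConjugator_add_mul, matchingConjugator_add_mul,
    matchingConjugator_arcPerm, affExt_add_mul, affExt_coe, arcPerm_val, ← Nat.cast_add,
    matchingConjugator_arcIndex_add]

lemma affLen_matchingConjugator (hτ : IsMatching τ) :
    affLen m (matchingConjugator hτ) = #(nestings τ) + #(alignments τ) := by
  have hlt (r : Fin m) : (((arcPerm hτ).symm r : ℕ) : ℤ) < m := by exact_mod_cast Fin.isLt _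
  rw [matchingConjugator, affLen_affExt _ fun r => ⟨by positivity, by linarith [hlt r]⟩,
    Finset.card_eq_zero.2 (Finset.filter_eq_empty_iff.2 fun p _ => by
      have := hlt p.1; have := Int.natCast_nonneg ((arcPerm hτ).symm p.2 : ℕ); omega),
    add_zero, show (fun r => (((arcPerm hτ).symm r : ℕ) : ℤ)) =
      (fun x : Fin m => ((x : ℕ) : ℤ)) ∘ (arcPerm hτ).symm from rfl,
    inversions_strictMono_comp (g := fun x : Fin m => ((x : ℕ) : ℤ))
      (Nat.strictMono_cast.comp Fin.val_strictMono),
    card_inversions_symm, card_inversions_arcPerm]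

lemma affLen_affExt_matchingWindow (hτ : IsMatching τ) :
    affLen m (affExt m (matchingWindow τ)) = 2 * (#(nestings τ) + #(alignments τ)) := by
  rw [affLen_affExt _ matchingWindow_bounds, card_inversions_matchingWindow hτ,
    card_shifted_inversions_matchingWindow hτ]
  ring

end Conjugator

lemma gTau_eq_affExt (n : ℕ) (τ : Fin (2 * n) → Fin (2 * n)) :
    gTau n τ = affExt (2 * n) (matchingWindow τ) := by
  funext x
  simp only [gTau, affExt, matchingWindow]
  split_ifs <;> push_cast <;> ring

theorem stmt4 (n : ℕ) (hn : 0 < n) (τ : Fin (2*n) → Fin (2*n)) (hτ : IsMatching τ) :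
    ∃ w : ℤ → ℤ, IsAffinePerm (2*n) w ∧ windowSum (2*n) w = 0 ∧
      (∀ i : ℤ, gTau n τ (w i) = w (i + n)) ∧
      affLen (2*n) w + crossNum τ = n*(n-1)/2 ∧
      affLen (2*n) (gTau n τ) = 2 * affLen (2*n) w := by
  have : NeZero (2 * n) := ⟨by omega⟩
  have hO : #(openers τ) = n := by have := two_mul_card_openers hτ; omega
  refine ⟨matchingConjugator hτ, isAffinePerm_affExt _, windowSum_affExt_perm _, fun i => ?_,
    ?_, ?_⟩
  · rw [gTau_eq_affExt, affExt_matchingWindow_matchingConjugator, hO]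
  · have := crossNum_add_card_nestings_add_card_alignments hτ
    rw [hO, Nat.choose_two_right] at this
    rw [affLen_matchingConjugator, ← this]
    ring
  · rw [gTau_eq_affExt, affLen_affExt_matchingWindow hτ, affLen_matchingConjugator]

end
end

section
/- If a matching τ′ of [2n] is covered by a matching τ in the uncrossing order, then c(τ′) = c(τ) − 1. Consequently the uncrossing order on matchings of [2n] is a graded poset with rank function given by the crossing number c. -/
open Finset

noncomputable section
open scoped Classical

-- ====== my additions ======

private lemma fin_vne {m : ℕ} {x y : Fin m} (h : x ≠ y) : (x : ℕ) ≠ (y : ℕ) :=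
  fun hh => h (Fin.ext hh)

private lemma mem_cIoo_lt {m : ℕ} {a b x : Fin m} (h : a < b) :
    x ∈ cIoo a b ↔ a < x ∧ x < b := by
  simp [cIoo, h]

private lemma mem_cIoo_gt {m : ℕ} {a b x : Fin m} (h : b < a) :
    x ∈ cIoo a b ↔ (a < x ∨ x < b) ∧ x ≠ a ∧ x ≠ b := by
  simp [cIoo, asymm h]

private def cInd {m : ℕ} (f : Fin m → Fin m) (x y : Fin m) : ℕ :=
  if x < y ∧ y < f x ∧ f x < f y then 1 else 0

private lemma czero {m : ℕ} (f : Fin m → Fin m) (x y : Fin m)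
    (h : ¬((x : ℕ) < (y : ℕ) ∧ (y : ℕ) < ((f x : Fin m) : ℕ) ∧
      ((f x : Fin m) : ℕ) < ((f y : Fin m) : ℕ))) :
    cInd f x y = 0 := by
  unfold cInd
  rw [if_neg]
  exact fun hc => h ⟨hc.1, hc.2.1, hc.2.2⟩

private lemma crossNum_eq_sum {m : ℕ} (f : Fin m → Fin m) :
    crossNum f = ∑ x : Fin m, ∑ y : Fin m, cInd f x y := by
  rw [crossNum, Finset.card_filter, Fintype.sum_prod_type]
  rfl

private lemma crossNum_decomp {m : ℕ} (f : Fin m → Fin m) (S : Finset (Fin m)) :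
    crossNum f = (∑ x ∈ S, ∑ y ∈ S, cInd f x y)
      + (∑ u ∈ Sᶜ, ((∑ s ∈ S, cInd f s u) + (∑ s ∈ S, cInd f u s)))
      + ∑ x ∈ Sᶜ, ∑ y ∈ Sᶜ, cInd f x y := by
  rw [crossNum_eq_sum]
  rw [← Finset.sum_add_sum_compl S (fun x => ∑ y : Fin m, cInd f x y)]
  have h1 : ∀ x, (∑ y : Fin m, cInd f x y)
      = (∑ y ∈ S, cInd f x y) + ∑ y ∈ Sᶜ, cInd f x y :=
    fun x => (Finset.sum_add_sum_compl S _).symm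
  simp_rw [h1, Finset.sum_add_distrib]
  have h2 : (∑ x ∈ S, ∑ y ∈ Sᶜ, cInd f x y) = ∑ y ∈ Sᶜ, ∑ x ∈ S, cInd f x y :=
    Finset.sum_comm
  rw [h2]
  ring


private lemma arithA (a b c d u v : ℕ)
    (hab : a < b) (hbc : b < c) (hcd : c < d)
    (hua : u ≠ a) (hub : u ≠ b) (huc : u ≠ c) (hud : u ≠ d)
    (hva : v ≠ a) (hvb : v ≠ b) (hvc : v ≠ c) (hvd : v ≠ d)
    (h1 : ¬(a < u ∧ u < b ∧ c < v ∧ v < d)) (h2 : ¬(a < v ∧ v < b ∧ c < u ∧ u < d)) :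
    ((if a < u ∧ u < d ∧ d < v then 1 else 0) + (if b < u ∧ u < c ∧ c < v then 1 else 0))
      + ((if u < a ∧ a < v ∧ v < d then 1 else 0) + (if u < b ∧ b < v ∧ v < c then 1 else 0))
    = ((if a < u ∧ u < c ∧ c < v then 1 else 0) + (if b < u ∧ u < d ∧ d < v then 1 else 0))
      + ((if u < a ∧ a < v ∧ v < c then 1 else 0) + (if u < b ∧ b < v ∧ v < d then 1 else 0)) := by
  split_ifs <;> omega

private lemma arithB (a b c d u v : ℕ)
    (hab : a < b) (hbc : b < c) (hcd : c < d)
    (hua : u ≠ a) (hub : u ≠ b) (huc : u ≠ c) (hud : u ≠ d)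
    (hva : v ≠ a) (hvb : v ≠ b) (hvc : v ≠ c) (hvd : v ≠ d)
    (h1 : ¬(b < u ∧ u < c ∧ (v < a ∨ d < v))) (h2 : ¬(b < v ∧ v < c ∧ (u < a ∨ d < u))) :
    ((if a < u ∧ u < b ∧ b < v then 1 else 0) + (if c < u ∧ u < d ∧ d < v then 1 else 0))
      + ((if u < a ∧ a < v ∧ v < b then 1 else 0) + (if u < c ∧ c < v ∧ v < d then 1 else 0))
    = ((if a < u ∧ u < c ∧ c < v then 1 else 0) + (if b < u ∧ u < d ∧ d < v then 1 else 0))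
      + ((if u < a ∧ a < v ∧ v < c then 1 else 0) + (if u < b ∧ b < v ∧ v < d then 1 else 0)) := by
  split_ifs <;> omega

set_option maxHeartbeats 1000000 in
private lemma keyA {m : ℕ} {τ τ' : Fin m → Fin m}
    (hτ : Function.Involutive τ) (hτ' : Function.Involutive τ')
    {a b c d : Fin m} (hab : a < b) (hbc : b < c) (hcd : c < d)
    (hac : τ a = c) (hbd : τ b = d) (h'ad : τ' a = d) (h'bc : τ' b = c)
    (hagree : ∀ x, x ≠ a → x ≠ b → x ≠ c → x ≠ d → τ' x = τ x)
    (harc : ∀ x, a < x → x < b → c < τ x → τ x < d → False) :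
    crossNum τ' + 1 = crossNum τ := by
  have hca : τ c = a := by rw [← hac]; exact hτ a
  have hdb : τ d = b := by rw [← hbd]; exact hτ b
  have h'da : τ' d = a := by rw [← h'ad]; exact hτ' a
  have h'cb : τ' c = b := by rw [← h'bc]; exact hτ' b
  have Hab : (a : ℕ) < b := hab
  have Hbc : (b : ℕ) < c := hbc
  have Hcd : (c : ℕ) < d := hcd
  have nm1 : a ∉ ({b, c, d} : Finset (Fin m)) := by
    simp only [Finset.mem_insert, Finset.mem_singleton]
    push_neg
    exact ⟨ne_of_lt hab, ne_of_lt (hab.trans hbc), ne_of_lt ((hab.trans hbc).trans hcd)⟩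
  have nm2 : b ∉ ({c, d} : Finset (Fin m)) := by
    simp only [Finset.mem_insert, Finset.mem_singleton]
    push_neg
    exact ⟨ne_of_lt hbc, ne_of_lt (hbc.trans hcd)⟩
  have nm3 : c ∉ ({d} : Finset (Fin m)) := by
    simp only [Finset.mem_singleton]
    exact ne_of_lt hcd
  have hB : (∑ x ∈ ({a,b,c,d} : Finset (Fin m)), ∑ y ∈ ({a,b,c,d} : Finset (Fin m)), cInd τ x y)
      = (∑ x ∈ ({a,b,c,d} : Finset (Fin m)), ∑ y ∈ ({a,b,c,d} : Finset (Fin m)), cInd τ' x y) + 1 := by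
    simp only [Finset.sum_insert nm1, Finset.sum_insert nm2, Finset.sum_insert nm3,
      Finset.sum_singleton]
    simp only [cInd, hac, hbd, hca, hdb, h'ad, h'bc, h'cb, h'da]
    simp [hab, hbc, hcd, hab.trans hbc, hbc.trans hcd, hab.trans (hbc.trans hcd),
      lt_self_iff_false, asymm hab, asymm hbc, asymm hcd, asymm (hab.trans hbc),
      asymm (hbc.trans hcd), asymm (hab.trans (hbc.trans hcd))]
  have hM : ∀ u ∈ (({a,b,c,d} : Finset (Fin m)))ᶜ,
      ((∑ s ∈ ({a,b,c,d} : Finset (Fin m)), cInd τ' s u)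
        + ∑ s ∈ ({a,b,c,d} : Finset (Fin m)), cInd τ' u s)
      = ((∑ s ∈ ({a,b,c,d} : Finset (Fin m)), cInd τ s u)
        + ∑ s ∈ ({a,b,c,d} : Finset (Fin m)), cInd τ u s) := by
    intro u hu
    simp only [Finset.mem_compl, Finset.mem_insert, Finset.mem_singleton, not_or] at hu
    obtain ⟨hua, hub, huc, hud⟩ := hu
    have hvu : τ' u = τ u := hagree u hua hub huc hud
    have hta : τ u ≠ a := fun h => huc (by rw [← hτ u, h]; exact hac)
    have htb : τ u ≠ b := fun h => hud (by rw [← hτ u, h]; exact hbd)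
    have htc : τ u ≠ c := fun h => hua (by rw [← hτ u, h]; exact hca)
    have htd : τ u ≠ d := fun h => hub (by rw [← hτ u, h]; exact hdb)
    have Hua := fin_vne hua
    have Hub := fin_vne hub
    have Huc := fin_vne huc
    have Hud := fin_vne hud
    have Hta := fin_vne hta
    have Htb := fin_vne htb
    have Htc := fin_vne htc
    have Htd := fin_vne htd
    have Ha1 : ¬((a:ℕ) < (u:ℕ) ∧ (u:ℕ) < (b:ℕ) ∧ (c:ℕ) < ((τ u : ℕ))
        ∧ ((τ u : ℕ)) < (d:ℕ)) := by
      rintro ⟨h1, h2, h3, h4⟩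
      exact harc u h1 h2 h3 h4
    have Ha2 : ¬((a:ℕ) < ((τ u : ℕ)) ∧ ((τ u : ℕ)) < (b:ℕ)
        ∧ (c:ℕ) < (u:ℕ) ∧ (u:ℕ) < (d:ℕ)) := by
      rintro ⟨h1, h2, h3, h4⟩
      exact harc (τ u) h1 h2 (by rw [hτ u]; exact h3) (by rw [hτ u]; exact h4)
    simp only [Finset.sum_insert nm1, Finset.sum_insert nm2, Finset.sum_insert nm3,
      Finset.sum_singleton]
    rw [czero τ c u (by rw [hca]; omega),
        czero τ d u (by rw [hdb]; omega),
        czero τ u c (by rw [hca]; omega),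
        czero τ u d (by rw [hdb]; omega),
        czero τ' c u (by rw [h'cb]; omega),
        czero τ' d u (by rw [h'da]; omega),
        czero τ' u c (by rw [h'cb, hvu]; omega),
        czero τ' u d (by rw [h'da, hvu]; omega)]
    simp only [cInd, hac, hbd, h'ad, h'bc, hvu, Fin.lt_def, add_zero, zero_add]
    exact arithA _ _ _ _ _ _ Hab Hbc Hcd Hua Hub Huc Hud Hta Htb Htc Htd Ha1 Ha2
  have hMsum : (∑ u ∈ (({a,b,c,d} : Finset (Fin m)))ᶜ,
      ((∑ s ∈ ({a,b,c,d} : Finset (Fin m)), cInd τ' s u)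
        + ∑ s ∈ ({a,b,c,d} : Finset (Fin m)), cInd τ' u s))
      = ∑ u ∈ (({a,b,c,d} : Finset (Fin m)))ᶜ,
      ((∑ s ∈ ({a,b,c,d} : Finset (Fin m)), cInd τ s u)
        + ∑ s ∈ ({a,b,c,d} : Finset (Fin m)), cInd τ u s) :=
    Finset.sum_congr rfl hM
  have hE : (∑ x ∈ (({a,b,c,d} : Finset (Fin m)))ᶜ, ∑ y ∈ (({a,b,c,d} : Finset (Fin m)))ᶜ,
      cInd τ' x y)
      = ∑ x ∈ (({a,b,c,d} : Finset (Fin m)))ᶜ, ∑ y ∈ (({a,b,c,d} : Finset (Fin m)))ᶜ,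
      cInd τ x y := by
    refine Finset.sum_congr rfl fun x hx => Finset.sum_congr rfl fun y hy => ?_
    simp only [Finset.mem_compl, Finset.mem_insert, Finset.mem_singleton, not_or] at hx hy
    unfold cInd
    rw [hagree x hx.1 hx.2.1 hx.2.2.1 hx.2.2.2, hagree y hy.1 hy.2.1 hy.2.2.1 hy.2.2.2]
  rw [crossNum_decomp τ {a,b,c,d}, crossNum_decomp τ' {a,b,c,d}, hB, hMsum, hE]
  ring

set_option maxHeartbeats 1000000 in
private lemma keyB {m : ℕ} {τ τ' : Fin m → Fin m}
    (hτ : Function.Involutive τ) (hτ' : Function.Involutive τ')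
    {a b c d : Fin m} (hab : a < b) (hbc : b < c) (hcd : c < d)
    (hac : τ a = c) (hbd : τ b = d) (h'ab : τ' a = b) (h'cd : τ' c = d)
    (hagree : ∀ x, x ≠ a → x ≠ b → x ≠ c → x ≠ d → τ' x = τ x)
    (harc : ∀ x, b < x → x < c → (τ x < a ∨ d < τ x) → False) :
    crossNum τ' + 1 = crossNum τ := by
  have hca : τ c = a := by rw [← hac]; exact hτ a
  have hdb : τ d = b := by rw [← hbd]; exact hτ b
  have h'ba : τ' b = a := by rw [← h'ab]; exact hτ' a
  have h'dc : τ' d = c := by rw [← h'cd]; exact hτ' c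
  have Hab : (a : ℕ) < b := hab
  have Hbc : (b : ℕ) < c := hbc
  have Hcd : (c : ℕ) < d := hcd
  have nm1 : a ∉ ({b, c, d} : Finset (Fin m)) := by
    simp only [Finset.mem_insert, Finset.mem_singleton]
    push_neg
    exact ⟨ne_of_lt hab, ne_of_lt (hab.trans hbc), ne_of_lt ((hab.trans hbc).trans hcd)⟩
  have nm2 : b ∉ ({c, d} : Finset (Fin m)) := by
    simp only [Finset.mem_insert, Finset.mem_singleton]
    push_neg
    exact ⟨ne_of_lt hbc, ne_of_lt (hbc.trans hcd)⟩
  have nm3 : c ∉ ({d} : Finset (Fin m)) := by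
    simp only [Finset.mem_singleton]
    exact ne_of_lt hcd
  have hB : (∑ x ∈ ({a,b,c,d} : Finset (Fin m)), ∑ y ∈ ({a,b,c,d} : Finset (Fin m)), cInd τ x y)
      = (∑ x ∈ ({a,b,c,d} : Finset (Fin m)), ∑ y ∈ ({a,b,c,d} : Finset (Fin m)), cInd τ' x y) + 1 := by
    simp only [Finset.sum_insert nm1, Finset.sum_insert nm2, Finset.sum_insert nm3,
      Finset.sum_singleton]
    simp only [cInd, hac, hbd, hca, hdb, h'ab, h'cd, h'ba, h'dc]
    simp [hab, hbc, hcd, hab.trans hbc, hbc.trans hcd, hab.trans (hbc.trans hcd),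
      lt_self_iff_false, asymm hab, asymm hbc, asymm hcd, asymm (hab.trans hbc),
      asymm (hbc.trans hcd), asymm (hab.trans (hbc.trans hcd))]
  have hM : ∀ u ∈ (({a,b,c,d} : Finset (Fin m)))ᶜ,
      ((∑ s ∈ ({a,b,c,d} : Finset (Fin m)), cInd τ' s u)
        + ∑ s ∈ ({a,b,c,d} : Finset (Fin m)), cInd τ' u s)
      = ((∑ s ∈ ({a,b,c,d} : Finset (Fin m)), cInd τ s u)
        + ∑ s ∈ ({a,b,c,d} : Finset (Fin m)), cInd τ u s) := by
    intro u hu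
    simp only [Finset.mem_compl, Finset.mem_insert, Finset.mem_singleton, not_or] at hu
    obtain ⟨hua, hub, huc, hud⟩ := hu
    have hvu : τ' u = τ u := hagree u hua hub huc hud
    have hta : τ u ≠ a := fun h => huc (by rw [← hτ u, h]; exact hac)
    have htb : τ u ≠ b := fun h => hud (by rw [← hτ u, h]; exact hbd)
    have htc : τ u ≠ c := fun h => hua (by rw [← hτ u, h]; exact hca)
    have htd : τ u ≠ d := fun h => hub (by rw [← hτ u, h]; exact hdb)
    have Hua := fin_vne hua
    have Hub := fin_vne hub
    have Huc := fin_vne huc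
    have Hud := fin_vne hud
    have Hta := fin_vne hta
    have Htb := fin_vne htb
    have Htc := fin_vne htc
    have Htd := fin_vne htd
    have Ha1 : ¬((b:ℕ) < (u:ℕ) ∧ (u:ℕ) < (c:ℕ) ∧ (((τ u : ℕ)) < (a:ℕ) ∨ (d:ℕ) < ((τ u : ℕ)))) := by
      rintro ⟨h1, h2, h3⟩
      refine harc u h1 h2 ?_
      rcases h3 with h3 | h3
      · exact Or.inl h3
      · exact Or.inr h3
    have Ha2 : ¬((b:ℕ) < ((τ u : ℕ)) ∧ ((τ u : ℕ)) < (c:ℕ) ∧ ((u:ℕ) < (a:ℕ) ∨ (d:ℕ) < (u:ℕ))) := by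
      rintro ⟨h1, h2, h3⟩
      refine harc (τ u) h1 h2 ?_
      rcases h3 with h3 | h3
      · exact Or.inl (by rw [hτ u]; exact h3)
      · exact Or.inr (by rw [hτ u]; exact h3)
    simp only [Finset.sum_insert nm1, Finset.sum_insert nm2, Finset.sum_insert nm3,
      Finset.sum_singleton]
    rw [czero τ c u (by rw [hca]; omega),
        czero τ d u (by rw [hdb]; omega),
        czero τ u c (by rw [hca]; omega),
        czero τ u d (by rw [hdb]; omega),
        czero τ' b u (by rw [h'ba]; omega),
        czero τ' d u (by rw [h'dc]; omega),
        czero τ' u b (by rw [h'ba, hvu]; omega),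
        czero τ' u d (by rw [h'dc, hvu]; omega)]
    simp only [cInd, hac, hbd, h'ab, h'cd, hvu, Fin.lt_def, add_zero, zero_add]
    exact arithB _ _ _ _ _ _ Hab Hbc Hcd Hua Hub Huc Hud Hta Htb Htc Htd Ha1 Ha2
  have hMsum : (∑ u ∈ (({a,b,c,d} : Finset (Fin m)))ᶜ,
      ((∑ s ∈ ({a,b,c,d} : Finset (Fin m)), cInd τ' s u)
        + ∑ s ∈ ({a,b,c,d} : Finset (Fin m)), cInd τ' u s))
      = ∑ u ∈ (({a,b,c,d} : Finset (Fin m)))ᶜ,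
      ((∑ s ∈ ({a,b,c,d} : Finset (Fin m)), cInd τ s u)
        + ∑ s ∈ ({a,b,c,d} : Finset (Fin m)), cInd τ u s) :=
    Finset.sum_congr rfl hM
  have hE : (∑ x ∈ (({a,b,c,d} : Finset (Fin m)))ᶜ, ∑ y ∈ (({a,b,c,d} : Finset (Fin m)))ᶜ,
      cInd τ' x y)
      = ∑ x ∈ (({a,b,c,d} : Finset (Fin m)))ᶜ, ∑ y ∈ (({a,b,c,d} : Finset (Fin m)))ᶜ,
      cInd τ x y := by
    refine Finset.sum_congr rfl fun x hx => Finset.sum_congr rfl fun y hy => ?_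
    simp only [Finset.mem_compl, Finset.mem_insert, Finset.mem_singleton, not_or] at hx hy
    unfold cInd
    rw [hagree x hx.1 hx.2.1 hx.2.2.1 hx.2.2.2, hagree y hy.1 hy.2.1 hy.2.2.1 hy.2.2.2]
  rw [crossNum_decomp τ {a,b,c,d}, crossNum_decomp τ' {a,b,c,d}, hB, hMsum, hE]
  ring

theorem stmt6 (n : ℕ) :
    (∀ τ' τ : Fin (2*n) → Fin (2*n), UncrossCover τ' τ →
      crossNum τ' + 1 = crossNum τ) ∧
    (∀ τ' τ : Fin (2*n) → Fin (2*n), IsMatching τ' → IsMatching τ →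
      uncrossLE τ' τ →
      crossNum τ' ≤ crossNum τ ∧ (crossNum τ' = crossNum τ → τ' = τ)) := by
  have part1 : ∀ τ' τ : Fin (2*n) → Fin (2*n), UncrossCover τ' τ →
      crossNum τ' + 1 = crossNum τ := by
    rintro τ' τ ⟨hM', hM, a, b, c, d, hcyc, hτac, hτbd, hagree, hcase⟩
    have hτ := hM.1
    have hτ' := hM'.1
    have hca : τ c = a := by rw [← hτac]; exact hτ a
    have hdb : τ d = b := by rw [← hτbd]; exact hτ b
    rcases hcase with ⟨h'ad, h'bc, harc⟩ | ⟨h'ab, h'cd, harc⟩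
    · -- case (i): τ' a = d, τ' b = c
      have h'da : τ' d = a := by rw [← h'ad]; exact hτ' a
      have h'cb : τ' c = b := by rw [← h'bc]; exact hτ' b
      rcases hcyc with ⟨hab, hbc, hcd⟩ | ⟨hbc, hcd, hda⟩ | ⟨hcd, hda, hab⟩ | ⟨hda, hab, hbc⟩
      · -- a < b < c < d : keyA (a b c d)
        refine keyA hτ hτ' hab hbc hcd hτac hτbd h'ad h'bc hagree ?_
        intro x h1 h2 h3 h4
        exact harc x ((mem_cIoo_lt hab).mpr ⟨h1, h2⟩) ((mem_cIoo_lt hcd).mpr ⟨h3, h4⟩)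
      · -- b < c < d < a : keyB (b c d a)
        refine keyB hτ hτ' hbc hcd hda hτbd hca h'bc h'da
          (fun x h1 h2 h3 h4 => hagree x h4 h1 h2 h3) ?_
        intro x h1 h2 h3
        have hxa : τ x ≠ a := fun h => absurd (by rw [← hτ x, h]; exact hτac : x = c)
          (ne_of_gt h1)
        have hxb : τ x ≠ b := fun h => absurd (by rw [← hτ x, h]; exact hτbd : x = d)
          (ne_of_lt h2)
        have hmem : τ x ∈ cIoo a b :=
          (mem_cIoo_gt (hbc.trans (hcd.trans hda))).mpr ⟨h3.symm, hxa, hxb⟩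
        exact harc (τ x) hmem (by rw [hτ x]; exact (mem_cIoo_lt hcd).mpr ⟨h1, h2⟩)
      · -- c < d < a < b : keyA (c d a b)
        refine keyA hτ hτ' hcd hda hab hca hdb h'cb h'da
          (fun x h1 h2 h3 h4 => hagree x h3 h4 h1 h2) ?_
        intro x h1 h2 h3 h4
        exact harc (τ x) ((mem_cIoo_lt hab).mpr ⟨h3, h4⟩)
          (by rw [hτ x]; exact (mem_cIoo_lt hcd).mpr ⟨h1, h2⟩)
      · -- d < a < b < c : keyB (d a b c)
        refine keyB hτ hτ' hda hab hbc hdb hτac h'da h'bc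
          (fun x h1 h2 h3 h4 => hagree x h2 h3 h4 h1) ?_
        intro x h1 h2 h3
        have hxc : τ x ≠ c := fun h => absurd (by rw [← hτ x, h]; exact hca : x = a)
          (ne_of_gt h1)
        have hxd : τ x ≠ d := fun h => absurd (by rw [← hτ x, h]; exact hdb : x = b)
          (ne_of_lt h2)
        have hmem : τ x ∈ cIoo c d :=
          (mem_cIoo_gt (hda.trans (hab.trans hbc))).mpr ⟨h3.symm, hxc, hxd⟩
        exact harc x ((mem_cIoo_lt hab).mpr ⟨h1, h2⟩) hmem
    · -- case (ii): τ' a = b, τ' c = d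
      have h'ba : τ' b = a := by rw [← h'ab]; exact hτ' a
      have h'dc : τ' d = c := by rw [← h'cd]; exact hτ' c
      rcases hcyc with ⟨hab, hbc, hcd⟩ | ⟨hbc, hcd, hda⟩ | ⟨hcd, hda, hab⟩ | ⟨hda, hab, hbc⟩
      · -- a < b < c < d : keyB (a b c d)
        refine keyB hτ hτ' hab hbc hcd hτac hτbd h'ab h'cd hagree ?_
        intro x h1 h2 h3
        have hxd : τ x ≠ d := fun h => absurd (by rw [← hτ x, h]; exact hdb : x = b)
          (ne_of_gt h1)
        have hxa : τ x ≠ a := fun h => absurd (by rw [← hτ x, h]; exact hτac : x = c)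
          (ne_of_lt h2)
        have hmem : τ x ∈ cIoo d a :=
          (mem_cIoo_gt (hab.trans (hbc.trans hcd))).mpr ⟨h3.symm, hxd, hxa⟩
        exact harc x ((mem_cIoo_lt hbc).mpr ⟨h1, h2⟩) hmem
      · -- b < c < d < a : keyA (b c d a)
        refine keyA hτ hτ' hbc hcd hda hτbd hca h'ba h'cd
          (fun x h1 h2 h3 h4 => hagree x h4 h1 h2 h3) ?_
        intro x h1 h2 h3 h4
        exact harc x ((mem_cIoo_lt hbc).mpr ⟨h1, h2⟩) ((mem_cIoo_lt hda).mpr ⟨h3, h4⟩)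
      · -- c < d < a < b : keyB (c d a b)
        refine keyB hτ hτ' hcd hda hab hca hdb h'cd h'ab
          (fun x h1 h2 h3 h4 => hagree x h3 h4 h1 h2) ?_
        intro x h1 h2 h3
        have hxb : τ x ≠ b := fun h => absurd (by rw [← hτ x, h]; exact hτbd : x = d)
          (ne_of_gt h1)
        have hxc : τ x ≠ c := fun h => absurd (by rw [← hτ x, h]; exact hca : x = a)
          (ne_of_lt h2)
        have hmem : τ x ∈ cIoo b c :=
          (mem_cIoo_gt (hcd.trans (hda.trans hab))).mpr ⟨h3.symm, hxb, hxc⟩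
        exact harc (τ x) hmem (by rw [hτ x]; exact (mem_cIoo_lt hda).mpr ⟨h1, h2⟩)
      · -- d < a < b < c : keyA (d a b c)
        refine keyA hτ hτ' hda hab hbc hdb hτac h'dc h'ab
          (fun x h1 h2 h3 h4 => hagree x h2 h3 h4 h1) ?_
        intro x h1 h2 h3 h4
        exact harc (τ x) ((mem_cIoo_lt hbc).mpr ⟨h3, h4⟩)
          (by rw [hτ x]; exact (mem_cIoo_lt hda).mpr ⟨h1, h2⟩)
  refine ⟨part1, ?_⟩
  intro τ' τ _ _ hle
  clear * - part1 hle
  induction hle with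
  | refl => exact ⟨le_refl _, fun _ => rfl⟩
  | @tail mid τ2 hstep hcov ih =>
      have h := part1 _ _ hcov
      have hlt : crossNum mid < crossNum τ2 := by omega
      refine ⟨ih.1.trans hlt.le, fun heq => ?_⟩
      exact absurd (heq ▸ lt_of_le_of_lt ih.1 hlt) (lt_irrefl _)

end
end

section
/- An affine permutation f of period 2n is an electrical affine permutation for n if and only if f = f_τ for some matching τ of [2n]; moreover, the matching τ with f = f_τ is unique. -/
open Finset

noncomputable section
open scoped Classical

/-!
Put `g = f + 1`. The conditions on `f` say that `g` commutes with translation by `2n`, that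
`g x ∈ (x, x + 2n)`, and that `g (g x) ≡ x (mod 2n)`; the window forces `g (g x) = x + 2n`.
Hence `g` reduced mod `2n` is a fixed-point-free involution `τ` of `[2n]`, and `g = g_τ` because
every residue other than `i` has exactly one representative in `(i, i + 2n)`, which is how `g_τ`
is defined. The same identity `g_τ (g_τ x) = x + 2n` gives bijectivity and the congruence
condition in the converse, and the window sum is `n · 2n − 2n` since each pair `a < b` of `τ`
contributes `(b − a) + (a + 2n − b) = 2n`. Uniqueness holds because `g_τ i ≡ τ i (mod 2n)`.
-/

open Function

lemma Function.Periodic.sum_range_add_one {h : ℤ → ℤ} {m : ℕ} (hh : Periodic h m) :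
    ∑ i ∈ range m, h (i + 1) = ∑ i ∈ range m, h i := by
  cases m with
  | zero => rfl
  | succ k =>
    have h0 : h (k + 1) = h 0 := by simpa using hh 0
    rw [sum_range_succ, sum_range_succ' (fun i : ℕ => h i), h0]
    push_cast
    rfl

lemma eq_add_of_dvd_sub {M x y : ℤ} (hdvd : M ∣ y - x) (h₁ : x < y) (h₂ : y < x + 2 * M) :
    y = x + M := by
  have : y - x - M = 0 :=
    Int.eq_zero_of_abs_lt_dvd (dvd_sub hdvd (dvd_refl M)) (abs_lt.2 ⟨by linarith, by linarith⟩)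
  linarith

lemma exists_fin_natCast_eq_emod {m : ℕ} (hm : 0 < m) (x : ℤ) :
    ∃ i : Fin m, (i : ℤ) = x % m := by
  have h₀ := Int.emod_nonneg x (b := m) (by omega)
  have h₁ := Int.emod_lt_of_pos x (b := m) (by omega)
  exact ⟨⟨(x % m).toNat, by omega⟩, by simp [h₀]⟩

lemma eq_ite_emod {m : ℕ} (i : Fin m) {y : ℤ} (h₁ : (i : ℤ) < y) (h₂ : y < i + m) :
    y = if (i : ℤ) < y % m then y % m else y % m + m := by
  have hi := i.isLt
  rcases lt_or_ge y m with hy | hy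
  · rw [Int.emod_eq_of_lt (by omega) hy, if_pos h₁]
  · have : y % m = y - m := by
      rw [← Int.emod_eq_of_lt (a := y - m) (b := m) (by omega) (by omega), Int.sub_emod,
        Int.emod_self]
      simp
    rw [this, if_neg (by omega)]
    ring

section ShiftEquivariant

variable {m : ℕ} {g g' : ℤ → ℤ}

lemma periodic_sub_self (hg : ∀ x, g (x + m) = g x + m) : Periodic (fun x => g x - x) m :=
  fun x => by simp only [hg]; ring

lemma map_add_int_mul (hg : ∀ x, g (x + m) = g x + m) (x k : ℤ) :
    g (x + k * m) = g x + k * m := by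
  have := (periodic_sub_self hg).int_mul k x
  simp only [Int.cast_id] at this
  linarith

lemma map_emod_emod (hg : ∀ x, g (x + m) = g x + m) (x : ℤ) : g (x % m) % m = g x % m := by
  conv_rhs => rw [← Int.emod_add_ediv_mul x m, map_add_int_mul hg, Int.add_mul_emod_self_right]

lemma eq_of_map_add_of_eqOn_fin (hm : 0 < m) (hg : ∀ x, g (x + m) = g x + m)
    (hg' : ∀ x, g' (x + m) = g' x + m) (h : ∀ i : Fin m, g i = g' i) : g = g' := by
  funext x
  obtain ⟨i, hi⟩ := exists_fin_natCast_eq_emod hm x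
  rw [← Int.emod_add_ediv_mul x m, ← hi, map_add_int_mul hg, map_add_int_mul hg', h]

lemma bijective_of_comp_self_eq_add (h : ∀ x, g (g x) = x + m) : Bijective g :=
  ⟨fun a b hab => by simpa [h] using congrArg g hab,
    fun y => ⟨g (y - m), by rw [h, sub_add_cancel]⟩⟩

end ShiftEquivariant

lemma IsMatching.two_mul_card_filter_lt {m : ℕ} {τ : Fin m → Fin m} (hτ : IsMatching τ) :
    2 * #{i | τ i < i} = m := by
  have hswap : #{i | τ i < i} = #{i | i < τ i} :=
    card_nbij' τ τ (fun i hi => by simpa [hτ.1 i] using hi)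
      (fun i hi => by simpa [hτ.1 i] using hi) (fun i _ => hτ.1 i) (fun i _ => hτ.1 i)
  have hcompl : #{i | ¬ τ i < i} = #{i | i < τ i} := by
    congr 1
    exact filter_congr fun i _ => by have := hτ.2 i; constructor <;> intro h <;> omega
  have := card_filter_add_card_filter_not (s := (univ : Finset (Fin m))) (fun i => τ i < i)
  rw [hcompl, card_univ, Fintype.card_fin] at this
  omega

section GTau

variable {n : ℕ} {τ : Fin (2 * n) → Fin (2 * n)}

lemma gTau_natCast (i : Fin (2 * n)) :
    gTau n τ i = if i < τ i then (τ i : ℤ) else τ i + (2 * n : ℕ) := by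
  have hx : (i : ℤ) % ((2 * n : ℕ) : ℤ) = i :=
    Int.emod_eq_of_lt (by positivity) (by exact_mod_cast i.isLt)
  unfold gTau
  simp only [hx, Int.toNat_natCast, Fin.eta, i.isLt, dif_pos]
  push_cast
  ring_nf

lemma gTau_add (x : ℤ) : gTau n τ (x + (2 * n : ℕ)) = gTau n τ x + (2 * n : ℕ) := by
  unfold gTau
  rw [Int.add_emod_right]
  split_ifs <;> ring

lemma gTau_natCast_mem_Ioo (hτ : ∀ i, τ i ≠ i) (i : Fin (2 * n)) :
    gTau n τ i ∈ Set.Ioo (i : ℤ) (i + (2 * n : ℕ)) := by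
  have := (τ i).isLt
  have := Fin.val_ne_iff.2 (hτ i)
  rw [gTau_natCast, Set.mem_Ioo]
  split_ifs with h <;> rw [Fin.lt_def] at h <;> omega

lemma gTau_mem_Ioo (hn : 0 < n) (hτ : ∀ i, τ i ≠ i) (x : ℤ) :
    gTau n τ x ∈ Set.Ioo x (x + (2 * n : ℕ)) := by
  obtain ⟨i, hi⟩ := exists_fin_natCast_eq_emod (m := 2 * n) (by omega) x
  rw [← Int.emod_add_ediv_mul x (2 * n : ℕ), ← hi, map_add_int_mul gTau_add]
  obtain ⟨h₁, h₂⟩ := gTau_natCast_mem_Ioo hτ i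
  constructor <;> linarith

lemma gTau_gTau_natCast (hτ : IsMatching τ) (i : Fin (2 * n)) :
    gTau n τ (gTau n τ i) = i + (2 * n : ℕ) := by
  rcases lt_or_gt_of_ne (hτ.2 i) with h | h
  · rw [gTau_natCast i, if_neg (lt_asymm h), gTau_add, gTau_natCast,
      if_pos (by rw [hτ.1]; exact h), hτ.1]
  · rw [gTau_natCast i, if_pos h, gTau_natCast, if_neg (by rw [hτ.1]; exact lt_asymm h), hτ.1]

lemma gTau_gTau (hn : 0 < n) (hτ : IsMatching τ) (x : ℤ) :
    gTau n τ (gTau n τ x) = x + (2 * n : ℕ) := by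
  have := eq_of_map_add_of_eqOn_fin (m := 2 * n) (g := gTau n τ ∘ gTau n τ)
    (g' := (· + (2 * n : ℕ))) (by omega) (fun x => by simp only [comp_apply, gTau_add])
    (fun x => by ring) (gTau_gTau_natCast hτ)
  exact congrFun this x

lemma sum_gTau_natCast_sub (hτ : IsMatching τ) :
    ∑ i : Fin (2 * n), (gTau n τ i - i) = 2 * n * n := by
  have hterm (i : Fin (2 * n)) :
      gTau n τ i - i = ((τ i : ℤ) - i) + if τ i < i then ((2 * n : ℕ) : ℤ) else 0 := by
    rw [gTau_natCast]
    rcases lt_or_gt_of_ne (hτ.2 i) with h | h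
    · rw [if_neg (lt_asymm h), if_pos h]; ring
    · rw [if_pos h, if_neg (lt_asymm h)]; ring
  have hperm : ∑ i, (τ i : ℤ) = ∑ i : Fin (2 * n), (i : ℤ) :=
    Equiv.sum_comp hτ.1.toPerm (fun i => (i : ℤ))
  have hcard := hτ.two_mul_card_filter_lt
  rw [sum_congr rfl (fun i _ => hterm i), sum_add_distrib, sum_sub_distrib, hperm, sub_self,
    zero_add, sum_ite, sum_const_zero, add_zero, sum_const, nsmul_eq_mul,
    show #{i | τ i < i} = n by omega]
  push_cast
  ring

lemma fTau_injective : Injective (fTau n) := by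
  intro τ τ' h
  funext i
  have h := congrFun h i
  simp only [fTau, sub_left_inj, gTau_natCast] at h
  have := (τ i).isLt
  have := (τ' i).isLt
  apply Fin.ext
  split_ifs at h <;> omega

lemma windowSum_fTau (hτ : IsMatching τ) :
    windowSum (2 * n) (fTau n τ) = (n - 1) * (2 * n) := by
  have hshift := (periodic_sub_self (gTau_add (τ := τ))).sum_range_add_one
  have hfin := Fin.sum_univ_eq_sum_range (fun i : ℕ => gTau n τ i - i) (2 * n)
  unfold windowSum fTau
  simp only [sub_right_comm _ (1 : ℤ)]
  rw [sum_sub_distrib, hshift, ← hfin, sum_gTau_natCast_sub hτ, sum_const, card_range]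
  ring

lemma fTau_isElectrical (hn : 0 < n) (hτ : IsMatching τ) : IsElectrical n (fTau n τ) := by
  refine ⟨⟨?_, fun x => ?_⟩, fun x => ?_, ?_, fun x => ?_⟩
  · exact (Equiv.subRight (1 : ℤ)).bijective.comp
      (bijective_of_comp_self_eq_add (gTau_gTau hn hτ))
  · simp only [fTau, gTau_add]
    ring
  · obtain ⟨h₁, h₂⟩ := gTau_mem_Ioo hn hτ.2 x
    simp only [fTau]
    push_cast at h₂
    omega
  · exact windowSum_fTau hτ
  · simp only [fTau, sub_add_cancel, gTau_gTau hn hτ]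
    rw [show x + ((2 * n : ℕ) : ℤ) - 1 - (x - 1) = (2 * n : ℕ) by ring, Int.emod_self]

lemma exists_isMatching_gTau_eq (hn : 0 < n) {g : ℤ → ℤ}
    (hg : ∀ x, g (x + (2 * n : ℕ)) = g x + (2 * n : ℕ))
    (hg_mem : ∀ x : ℤ, g x ∈ Set.Ioo x (x + (2 * n : ℕ)))
    (hgg : ∀ x, g (g x) = x + (2 * n : ℕ)) :
    ∃ τ, IsMatching τ ∧ gTau n τ = g := by
  choose τ hτ using fun i : Fin (2 * n) => exists_fin_natCast_eq_emod (m := 2 * n) (by omega) (g i)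
  have hgτ : gTau n τ = g := by
    refine eq_of_map_add_of_eqOn_fin (by omega) gTau_add hg fun i => ?_
    conv_rhs => rw [eq_ite_emod i (hg_mem i).1 (hg_mem i).2, ← hτ i]
    simp only [gTau_natCast, Nat.cast_lt, Fin.val_fin_lt]
  refine ⟨τ, ⟨fun i => ?_, fun i h => ?_⟩, hgτ⟩
  · have hi := i.isLt
    apply Fin.ext
    apply Nat.cast_injective (R := ℤ)
    rw [hτ, hτ i, map_emod_emod hg, hgg, Int.add_emod_right,
      Int.emod_eq_of_lt (by omega) (by omega)]
  · have := (hg_mem i).2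
    rw [← hgτ, gTau_natCast, h, if_neg (lt_irrefl i)] at this
    exact lt_irrefl _ this

end GTau

lemma IsElectrical.exists_isMatching {n : ℕ} (hn : 0 < n) {f : ℤ → ℤ} (hf : IsElectrical n f) :
    ∃ τ, IsMatching τ ∧ f = fTau n τ := by
  obtain ⟨⟨-, hper⟩, hbd, -, hcong⟩ := hf
  set g := fun x => f x + 1
  have hg : ∀ x, g (x + (2 * n : ℕ)) = g x + (2 * n : ℕ) := fun x => by
    simp only [g, hper]
    ring
  have hg_mem : ∀ x : ℤ, g x ∈ Set.Ioo x (x + (2 * n : ℕ)) := fun x => by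
    have := hbd x
    simp only [g, Set.mem_Ioo]
    push_cast
    omega
  have hgg : ∀ x, g (g x) = x + (2 * n : ℕ) := fun x => by
    refine eq_add_of_dvd_sub ?_ ((hg_mem x).1.trans (hg_mem _).1) ?_
    · convert Int.dvd_of_emod_eq_zero (hcong x) using 1
      simp only [g]
      ring
    · linarith [(hg_mem x).2, (hg_mem (g x)).2]
  obtain ⟨τ, hτ, hgτ⟩ := exists_isMatching_gTau_eq hn hg hg_mem hgg
  refine ⟨τ, hτ, funext fun x => ?_⟩
  simp only [fTau, hgτ, g, add_sub_cancel_right]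

theorem stmt7 (n : ℕ) (hn : 0 < n) (f : ℤ → ℤ) :
    IsElectrical n f ↔
      ∃! τ : Fin (2*n) → Fin (2*n), IsMatching τ ∧ f = fTau n τ := by
  constructor
  · intro hf
    obtain ⟨τ, hτ, rfl⟩ := hf.exists_isMatching hn
    exact ⟨τ, ⟨hτ, rfl⟩, fun τ' h' => fTau_injective h'.2.symm⟩
  · rintro ⟨τ, ⟨hτ, rfl⟩, -⟩
    exact fTau_isElectrical hn hτ
end
end

section
/- Let f be an electrical affine permutation for n and let i ∈ ℤ. Then [2n] is the disjoint union of the three sets {representative in [2n] of (a+1) mod 2n : a ∈ I_{i+1}(f)}, J_i(f), and {representatives in [2n] of i mod 2n and (i+1) mod 2n}. -/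
open Finset

noncomputable section
open scoped Classical

lemma dvdWindow (M d : ℤ) (hM : 0 < M) (hd : M ∣ d) (h1 : 0 < d) (h2 : d < 2*M) :
    d = M := by
  obtain ⟨t, ht⟩ := hd
  have ht1 : 1 ≤ t := by
    by_contra h
    push_neg at h
    have h' : t ≤ 0 := by omega
    nlinarith
  have ht2 : t ≤ 1 := by
    by_contra h
    push_neg at h
    have h' : 2 ≤ t := by omega
    nlinarith
  have : t = 1 := le_antisymm ht2 ht1
  rw [this, mul_one] at ht
  exact ht

lemma emod_eq_iff_dvd (M b v : ℤ) (h0 : 0 ≤ v) (hv : v < M) :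
    b % M = v ↔ M ∣ b - v := by
  constructor
  · intro h
    exact ⟨b / M, by linarith [Int.emod_add_mul_ediv b M]⟩
  · intro h
    have h1 : v % M = b % M := Int.modEq_iff_dvd.mpr h
    rw [← h1, Int.emod_eq_of_lt h0 hv]

theorem stmt9 (n : ℕ) (hn : 0 < n) (f : ℤ → ℤ) (hf : IsElectrical n f) (i : ℤ) :
    ∀ A J T : Finset (Fin (2*n)),
      A = (necklaceI (2*n) f (i+1)).image
            (fun x => (⟨((x:ℕ)+1) % (2*n), Nat.mod_lt _ (by omega)⟩ : Fin (2*n))) →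
      J = necklaceJ (2*n) f i →
      T = univ.filter (fun x : Fin (2*n) =>
            (((x:ℕ):ℤ) = i % ((2*n:ℕ):ℤ)) ∨ (((x:ℕ):ℤ) = (i+1) % ((2*n:ℕ):ℤ))) →
      (A ∪ J ∪ T = univ ∧ Disjoint A J ∧ Disjoint A T ∧ Disjoint J T) := by
  intro A J T hA hJ hT
  obtain ⟨⟨hbij, hper⟩, hbnd, hsum, helec⟩ := hf
  set M : ℤ := ((2*n : ℕ) : ℤ) with hMdef
  have hM2 : (2:ℤ) ≤ M := by rw [hMdef]; push_cast; omega
  have hM : (0:ℤ) < M := by omega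
  have hMeq : M = 2 * (n:ℤ) := by rw [hMdef]; push_cast; ring
  have hlow : ∀ j : ℤ, j ≤ f j := fun j => (hbnd j).1
  have hhigh : ∀ j : ℤ, f j ≤ j + M - 2 := by
    intro j
    have h := (hbnd j).2
    have : M = 2 * (n:ℤ) := by rw [hMdef]; push_cast; ring
    linarith
  have helec' : ∀ j : ℤ, M ∣ (f (f j + 1) - (j - 1)) :=
    fun j => Int.dvd_of_emod_eq_zero (helec j)
  have hxlt : ∀ x : Fin (2*n), ((x:ℕ):ℤ) < M := by
    intro x; rw [hMdef]; exact_mod_cast x.isLt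
  have hx0 : ∀ x : Fin (2*n), (0:ℤ) ≤ ((x:ℕ):ℤ) := fun x => Int.natCast_nonneg _
  -- membership characterizations
  have memT : ∀ x : Fin (2*n),
      x ∈ T ↔ (M ∣ (i - ((x:ℕ):ℤ)) ∨ M ∣ (i + 1 - ((x:ℕ):ℤ))) := by
    intro x
    rw [hT]
    simp only [mem_filter, mem_univ, true_and]
    have e1 : (((x:ℕ):ℤ) = i % M) ↔ M ∣ (i - ((x:ℕ):ℤ)) := by
      rw [eq_comm]; exact emod_eq_iff_dvd M i _ (hx0 x) (hxlt x)
    have e2 : (((x:ℕ):ℤ) = (i+1) % M) ↔ M ∣ (i + 1 - ((x:ℕ):ℤ)) := by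
      rw [eq_comm]; exact emod_eq_iff_dvd M (i+1) _ (hx0 x) (hxlt x)
    rw [e1, e2]
  have memJ : ∀ x : Fin (2*n),
      x ∈ J ↔ ∃ b : ℤ, b < i ∧ i ≤ f b ∧ M ∣ (b - ((x:ℕ):ℤ)) := by
    intro x
    rw [hJ]
    simp only [necklaceJ, mem_filter, mem_univ, true_and]
    constructor
    · rintro ⟨b, h1, h2, h3⟩
      exact ⟨b, h1, h2, (emod_eq_iff_dvd M b _ (hx0 x) (hxlt x)).mp h3⟩
    · rintro ⟨b, h1, h2, h3⟩
      exact ⟨b, h1, h2, (emod_eq_iff_dvd M b _ (hx0 x) (hxlt x)).mpr h3⟩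
  have memA : ∀ x : Fin (2*n),
      x ∈ A ↔ ∃ c : ℤ, c < i + 1 ∧ i + 1 ≤ f c ∧ M ∣ (f c + 1 - ((x:ℕ):ℤ)) := by
    intro x
    rw [hA]
    simp only [mem_image, necklaceI, mem_filter, mem_univ, true_and,
      Finset.bind_def, Finset.mem_sup, Finset.pure_def, Finset.mem_singleton]
    constructor
    · rintro ⟨a, ⟨y, ⟨c, h1, h2, h3⟩, hay⟩, hg⟩
      refine ⟨c, h1, h2, ?_⟩
      have hxv : (x:ℕ) = (a + 1) % (2*n) := by rw [← hg]
      have hxy2 : ((x:ℕ):ℤ) = (((y:ℕ):ℤ)+1) % M := by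
        rw [hxv, hay]
        push_cast [Int.natCast_mod]
        rw [hMeq]
      have d1 : M ∣ (f c - ((y:ℕ):ℤ)) :=
        (emod_eq_iff_dvd M (f c) _ (hx0 y) (hxlt y)).mp h3
      have d2 : M ∣ ((((y:ℕ):ℤ)+1) - ((x:ℕ):ℤ)) :=
        (emod_eq_iff_dvd M (((y:ℕ):ℤ)+1) _ (hx0 x) (hxlt x)).mp hxy2.symm
      have e3 : f c + 1 - ((x:ℕ):ℤ) =
          (f c - ((y:ℕ):ℤ)) + ((((y:ℕ):ℤ)+1) - ((x:ℕ):ℤ)) := by ring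
      rw [e3]
      exact dvd_add d1 d2
    · rintro ⟨c, h1, h2, hd⟩
      have hv0 : (0:ℤ) ≤ f c % M := Int.emod_nonneg _ (ne_of_gt hM)
      have hvM : f c % M < M := Int.emod_lt_of_pos _ hM
      have hvlt : (f c % M).toNat < 2*n := by omega
      refine ⟨(f c % M).toNat, ⟨⟨(f c % M).toNat, hvlt⟩, ⟨c, h1, h2, ?_⟩, rfl⟩, ?_⟩
      · show f c % M = (((f c % M).toNat : ℕ) : ℤ)
        rw [Int.toNat_of_nonneg hv0]
      · apply Fin.ext
        show ((f c % M).toNat + 1) % (2*n) = (x:ℕ)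
        have dfc : M ∣ (f c - (f c % M)) :=
          (emod_eq_iff_dvd M (f c) _ hv0 hvM).mp rfl
        have dgoal : M ∣ ((f c % M + 1) - ((x:ℕ):ℤ)) := by
          have e4 : (f c % M + 1) - ((x:ℕ):ℤ) =
              (f c + 1 - ((x:ℕ):ℤ)) - (f c - (f c % M)) := by ring
          rw [e4]
          exact dvd_sub hd dfc
        have key : (f c % M + 1) % M = ((x:ℕ):ℤ) :=
          (emod_eq_iff_dvd M _ _ (hx0 x) (hxlt x)).mpr dgoal
        have final : ((((f c % M).toNat + 1) % (2*n) : ℕ) : ℤ) = ((x:ℕ):ℤ) := by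
          push_cast [Int.natCast_mod]
          rw [Int.toNat_of_nonneg hv0, ← hMeq]
          exact key
        exact_mod_cast final
  -- disjointness A J
  have dAJ : Disjoint A J := by
    rw [Finset.disjoint_left]
    intro x hxA hxJ
    obtain ⟨c, hc1, hc2, hc3⟩ := (memA x).mp hxA
    obtain ⟨b, hb1, hb2, hb3⟩ := (memJ x).mp hxJ
    have hfb : f b ≤ b + M - 2 := hhigh b
    have hfc : f c ≤ c + M - 2 := hhigh c
    have d1 : M ∣ (f c + 1 - b) := by
      have e : f c + 1 - b = (f c + 1 - ((x:ℕ):ℤ)) - (b - ((x:ℕ):ℤ)) := by ring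
      rw [e]; exact dvd_sub hc3 hb3
    have e1 : f c + 1 - b = M :=
      dvdWindow M _ hM d1 (by omega) (by omega)
    have hbc : b ≤ c - 1 := by omega
    have d2 : M ∣ (f b - (c - 1)) := by
      have hu : f c + 1 = b + M := by omega
      have hp : f (f c + 1) = f b + M := by rw [hu]; exact hper b
      have h5 := helec' c
      rw [hp] at h5
      have h3 : f b + M - (c - 1) = M + (f b - (c - 1)) := by ring
      rw [h3] at h5
      exact (dvd_add_right (dvd_refl M)).mp h5
    have e2 : f b - (c - 1) = M :=
      dvdWindow M _ hM d2 (by omega) (by omega)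
    omega
  -- disjointness A T
  have dAT : Disjoint A T := by
    rw [Finset.disjoint_left]
    intro x hxA hxT
    obtain ⟨c, hc1, hc2, hc3⟩ := (memA x).mp hxA
    have hfc : f c ≤ c + M - 2 := hhigh c
    rcases (memT x).mp hxT with h | h
    · have d : M ∣ (f c + 1 - i) := by
        have e : f c + 1 - i = (f c + 1 - ((x:ℕ):ℤ)) - (i - ((x:ℕ):ℤ)) := by ring
        rw [e]; exact dvd_sub hc3 h
      have := dvdWindow M _ hM d (by omega) (by omega)
      omega
    · have d : M ∣ (f c + 1 - (i+1)) := by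
        have e : f c + 1 - (i+1) = (f c + 1 - ((x:ℕ):ℤ)) - (i + 1 - ((x:ℕ):ℤ)) := by ring
        rw [e]; exact dvd_sub hc3 h
      have := dvdWindow M _ hM d (by omega) (by omega)
      omega
  -- disjointness J T
  have dJT : Disjoint J T := by
    rw [Finset.disjoint_left]
    intro x hxJ hxT
    obtain ⟨b, hb1, hb2, hb3⟩ := (memJ x).mp hxJ
    have hfb : f b ≤ b + M - 2 := hhigh b
    rcases (memT x).mp hxT with h | h
    · have d : M ∣ (i - b) := by
        have e : i - b = (i - ((x:ℕ):ℤ)) - (b - ((x:ℕ):ℤ)) := by ring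
        rw [e]; exact dvd_sub h hb3
      have := dvdWindow M _ hM d (by omega) (by omega)
      omega
    · have d : M ∣ (i + 1 - b) := by
        have e : i + 1 - b = (i + 1 - ((x:ℕ):ℤ)) - (b - ((x:ℕ):ℤ)) := by ring
        rw [e]; exact dvd_sub h hb3
      have := dvdWindow M _ hM d (by omega) (by omega)
      omega
  refine ⟨?_, dAJ, dAT, dJT⟩
  -- union
  ext x
  simp only [mem_union, mem_univ, iff_true]
  set r : ℤ := (((x:ℕ):ℤ) - i) % M with hrdef
  have hr0 : 0 ≤ r := Int.emod_nonneg _ (ne_of_gt hM)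
  have hrM : r < M := Int.emod_lt_of_pos _ hM
  have hdr : M ∣ (((x:ℕ):ℤ) - i - r) :=
    ⟨(((x:ℕ):ℤ) - i) / M, by linarith [Int.emod_add_mul_ediv (((x:ℕ):ℤ) - i) M]⟩
  set b : ℤ := i - M + r with hbdef
  have hdbx : M ∣ (b - ((x:ℕ):ℤ)) := by
    have e : b - ((x:ℕ):ℤ) = -(((x:ℕ):ℤ) - i - r) - M := by rw [hbdef]; ring
    rw [e]
    exact dvd_sub (dvd_neg.mpr hdr) dvd_rfl
  by_cases hr1 : r = 0
  · refine Or.inr ((memT x).mpr (Or.inl ?_))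
    have e : i - ((x:ℕ):ℤ) = (b - ((x:ℕ):ℤ)) + M := by omega
    rw [e]
    exact dvd_add hdbx dvd_rfl
  by_cases hr2 : r = 1
  · refine Or.inr ((memT x).mpr (Or.inr ?_))
    have e : i + 1 - ((x:ℕ):ℤ) = (b - ((x:ℕ):ℤ)) + M := by omega
    rw [e]
    exact dvd_add hdbx dvd_rfl
  have hbrange : i - M + 2 ≤ b ∧ b ≤ i - 1 := by omega
  by_cases hfb : i ≤ f b
  · exact Or.inl (Or.inr ((memJ x).mpr ⟨b, by omega, hfb, hdbx⟩))
  · push_neg at hfb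
    have hlb : b ≤ f b := hlow b
    have hd1 : M ∣ (f (f b + 1) - (b - 1)) := helec' b
    have hlc : f b + 1 ≤ f (f b + 1) := hlow (f b + 1)
    have hd3 : M ∣ (f (f b + 1) + 1 - ((x:ℕ):ℤ)) := by
      have e : f (f b + 1) + 1 - ((x:ℕ):ℤ) =
          (f (f b + 1) - (b - 1)) + (b - ((x:ℕ):ℤ)) := by ring
      rw [e]
      exact dvd_add hd1 hdbx
    have h2 : i + 1 ≤ f (f b + 1) := by
      by_contra h
      push_neg at h
      have := dvdWindow M _ hM hd1 (by omega) (by omega)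
      omega
    exact Or.inl (Or.inl ((memA x).mpr ⟨f b + 1, by omega, h2, hd3⟩))

end
end
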